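/- arXiv:2206.01686 — 6 statements merged into one kernel-verified Lean document; each statement's English description precedes it below -/
import Mathlib

section
/- Uniqueness in the generalized stochastic sewing lemma (Theorem 1.1, uniqueness part). Under the standing hypotheses (H), suppose (𝒜_t)_{t ∈ [0,T]} and (𝒜'_t)_{t ∈ [0,T]} are ℝ^d-valued processes, each with value 0 at time 0, each ℱ_t-measurable and in L^m(P) at every time t, and suppose each of them satisfies, for some nonnegative constants C1, C2, C3 (possibly different for the two processes): ‖E[𝒜_{t2} − 𝒜_{t1} − A_{t1,t2} | ℱ_{t0}]‖_{L^m(P)} ≤ C1 (t1 − t0)^{−α}(t2 − t1)^{β1} whenever 0 ≤ t0 < t1 < t2 ≤ T and M(t2 − t1) ≤ t1 − t0, and ‖𝒜_{t2} − 𝒜_{t1} − A_{t1,t2}‖_{L^m(P)} ≤ C2 (t2 − t1)^{β1−α} + C3 (t2 − t1)^{β2} for all 0 ≤ t1 < t2 ≤ T. Then for every t ∈ [0,T], 𝒜_t = 𝒜'_t almost surely. -/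
open MeasureTheory Filter Topology
open scoped ENNReal InnerProductSpace

/-!
The germ `A` cancels in the difference `Z = 𝒜 - 𝒜'`, which therefore satisfies both sewing
estimates with `A` replaced by `0`. Cutting `[u, v]` into `N` equal pieces, the lagged
conditional bound gives `‖E[Z_v - Z_u | ℱ_s]‖ ≤ N · O(N^{-β₁}) → 0` because `β₁ > 1`; letting
the lag `u - s` shrink, with the unconditional bound controlling `Z_u - Z_s`, shows that `Z` is
a martingale. Martingale increments are orthogonal in `L²`, so over a mesh `t / n` one gets
`E‖Z_t‖² ≤ n · O((t / n)^{2e}) → 0`, where `e = min (β₁ - α) β₂ > 1/2`.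
-/

noncomputable def uniformGrid (a b : ℝ) (N k : ℕ) : ℝ := a + k * ((b - a) / N)

section UniformGrid

variable {a b : ℝ} {N : ℕ}

@[simp]
lemma uniformGrid_zero : uniformGrid a b N 0 = a := by
  simp [uniformGrid]

lemma uniformGrid_self (hN : N ≠ 0) : uniformGrid a b N N = b := by
  have : (N : ℝ) ≠ 0 := Nat.cast_ne_zero.2 hN
  simp only [uniformGrid]
  field_simp
  ring

lemma uniformGrid_succ_sub (k : ℕ) :
    uniformGrid a b N (k + 1) - uniformGrid a b N k = (b - a) / N := by
  simp only [uniformGrid, Nat.cast_add, Nat.cast_one]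
  ring

lemma uniformGrid_mono (hab : a ≤ b) : Monotone (uniformGrid a b N) := by
  intro k l hkl
  have : 0 ≤ (b - a) / N := div_nonneg (sub_nonneg.2 hab) N.cast_nonneg
  unfold uniformGrid
  gcongr

lemma uniformGrid_mem_Icc (hab : a ≤ b) {k : ℕ} (hk : k ≤ N) :
    uniformGrid a b N k ∈ Set.Icc a b := by
  refine ⟨?_, ?_⟩
  · simpa using uniformGrid_mono (N := N) hab k.zero_le
  rcases Nat.eq_zero_or_pos N with rfl | hN
  · simpa [Nat.le_zero.1 hk] using hab
  · simpa [uniformGrid_self hN.ne'] using uniformGrid_mono (a := a) (b := b) (N := N) hab hk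

end UniformGrid

lemma tendsto_natCast_mul_div_rpow {β : ℝ} (hβ : 1 < β) {x : ℝ} (hx : 0 ≤ x) :
    Tendsto (fun N : ℕ => N * (x / N) ^ β) atTop (𝓝 0) := by
  have hpow : Tendsto (fun N : ℕ => x ^ β * (N : ℝ) ^ (-(β - 1))) atTop (𝓝 0) := by
    have := ((tendsto_rpow_neg_atTop (y := β - 1) (by linarith)).comp
      tendsto_natCast_atTop_atTop).const_mul (x ^ β)
    rwa [mul_zero] at this
  refine hpow.congr' ?_
  filter_upwards [eventually_gt_atTop 0] with N hN
  have hN : (0 : ℝ) < N := Nat.cast_pos.2 hN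
  rw [Real.div_rpow hx hN.le, Real.rpow_neg hN.le, Real.rpow_sub_one hN.ne']
  field_simp

lemma add_mul_rpow_le_mul_rpow_min {a b e₁ e₂ δ T : ℝ} (ha : 0 ≤ a) (hb : 0 ≤ b)
    (hδ : 0 < δ) (hδT : δ ≤ T) :
    a * δ ^ e₁ + b * δ ^ e₂
      ≤ (a * T ^ (e₁ - min e₁ e₂) + b * T ^ (e₂ - min e₁ e₂)) * δ ^ min e₁ e₂ := by
  have key : ∀ e, min e₁ e₂ ≤ e → δ ^ e ≤ T ^ (e - min e₁ e₂) * δ ^ min e₁ e₂ := by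
    intro e he
    rw [← sub_add_cancel e (min e₁ e₂), Real.rpow_add hδ, add_sub_cancel_right]
    gcongr
  rw [add_mul, mul_assoc, mul_assoc]
  gcongr
  exacts [key _ (min_le_left _ _), key _ (min_le_right _ _)]

section LpBounds

variable {Ω E : Type*} [NormedAddCommGroup E] {m0 : MeasurableSpace Ω} {P : Measure Ω}
  {p : ℝ≥0∞}

lemma eLpNorm_sub_le_ofReal_add {f g : Ω → E} (hf : AEStronglyMeasurable f P)
    (hg : AEStronglyMeasurable g P) (hp : 1 ≤ p) {a b : ℝ} (ha : 0 ≤ a) (hb : 0 ≤ b)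
    (hfa : eLpNorm f p P ≤ ENNReal.ofReal a) (hgb : eLpNorm g p P ≤ ENNReal.ofReal b) :
    eLpNorm (f - g) p P ≤ ENNReal.ofReal (a + b) :=
  (eLpNorm_sub_le hf hg hp).trans ((add_le_add hfa hgb).trans_eq (ENNReal.ofReal_add ha hb).symm)

lemma integral_norm_sq_le_of_eLpNorm_le {f : Ω → E} (hf : MemLp f 2 P) {b : ℝ} (hb : 0 ≤ b)
    (h : eLpNorm f 2 P ≤ ENNReal.ofReal b) : ∫ ω, ‖f ω‖ ^ 2 ∂P ≤ b ^ 2 := by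
  rw [hf.eLpNorm_eq_integral_rpow_norm two_ne_zero ENNReal.ofNat_ne_top,
    ENNReal.ofReal_le_ofReal_iff hb, ENNReal.toReal_ofNat,
    Real.rpow_inv_le_iff_of_pos (integral_nonneg fun ω => by positivity) hb two_pos] at h
  simpa using h

end LpBounds

section ConditionalIncrements

variable {Ω E : Type*} [NormedAddCommGroup E] [NormedSpace ℝ E] [CompleteSpace E]
  {m m0 : MeasurableSpace Ω} {P : Measure Ω} {p : ℝ≥0∞} {Z : ℝ → Ω → E}

lemma eLpNorm_condExp_sub_le_sum (hm : m ≤ m0) (hp : 1 ≤ p) (t : ℕ → ℝ) (N : ℕ)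
    (hint : ∀ k ≤ N, Integrable (Z (t k)) P) :
    eLpNorm (P[Z (t N) - Z (t 0) | m]) p P
      ≤ ∑ k ∈ Finset.range N, eLpNorm (P[Z (t (k + 1)) - Z (t k) | m]) p P := by
  rw [← Finset.sum_range_sub (fun k => Z (t k))]
  refine (eLpNorm_congr_ae (condExp_finsetSum (fun k hk => ?_) m)).trans_le
    (eLpNorm_sum_le (fun k _ => (stronglyMeasurable_condExp.mono hm).aestronglyMeasurable) hp)
  have hk := Finset.mem_range.1 hk
  exact (hint _ hk).sub (hint _ hk.le)

theorem condExp_sub_eq_zero_of_eLpNorm_condExp_le_rpow (hm : m ≤ m0) (hp : 1 ≤ p)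
    {u v K β δ : ℝ} (huv : u < v) (hβ : 1 < β) (hδ : 0 < δ)
    (hint : ∀ r ∈ Set.Icc u v, Integrable (Z r) P)
    (hbound : ∀ u' v', u ≤ u' → u' < v' → v' ≤ v → v' - u' ≤ δ →
      eLpNorm (P[Z v' - Z u' | m]) p P ≤ ENNReal.ofReal (K * (v' - u') ^ β)) :
    P[Z v - Z u | m] =ᵐ[P] 0 := by
  refine (eLpNorm_eq_zero_iff (stronglyMeasurable_condExp.mono hm).aestronglyMeasurable
    (zero_lt_one.trans_le hp).ne').1 (le_antisymm ?_ zero_le)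
  have hsmall : ∀ᶠ N : ℕ in atTop, (v - u) / N ≤ δ :=
    (tendsto_const_div_atTop_nhds_zero_nat (v - u)).eventually (eventually_le_nhds hδ)
  have hbound_N : ∀ᶠ N : ℕ in atTop, eLpNorm (P[Z v - Z u | m]) p P
      ≤ ENNReal.ofReal (K * (N * ((v - u) / N) ^ β)) := by
    filter_upwards [eventually_gt_atTop 0, hsmall] with N hN hNδ
    set t := uniformGrid u v N with ht
    have hmesh : ∀ k, t (k + 1) - t k = (v - u) / N := uniformGrid_succ_sub
    have hpiece : ∀ k ∈ Finset.range N, eLpNorm (P[Z (t (k + 1)) - Z (t k) | m]) p P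
        ≤ ENNReal.ofReal (K * ((v - u) / N) ^ β) := by
      intro k hk
      have hk := Finset.mem_range.1 hk
      have hlt : t k < t (k + 1) := by
        rw [← sub_pos, hmesh]; exact div_pos (sub_pos.2 huv) (Nat.cast_pos.2 hN)
      have := hbound _ _ (uniformGrid_mem_Icc huv.le hk.le).1 hlt
        (uniformGrid_mem_Icc huv.le hk).2 (hmesh k ▸ hNδ)
      rwa [hmesh] at this
    calc eLpNorm (P[Z v - Z u | m]) p P
        = eLpNorm (P[Z (t N) - Z (t 0) | m]) p P := by
          rw [ht, uniformGrid_zero, uniformGrid_self hN.ne']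
      _ ≤ ∑ k ∈ Finset.range N, eLpNorm (P[Z (t (k + 1)) - Z (t k) | m]) p P :=
          eLpNorm_condExp_sub_le_sum hm hp t N fun k hk => hint _ (uniformGrid_mem_Icc huv.le hk)
      _ ≤ N * ENNReal.ofReal (K * ((v - u) / N) ^ β) := by
          simpa using Finset.sum_le_sum hpiece
      _ = ENNReal.ofReal (K * (N * ((v - u) / N) ^ β)) := by
          rw [← ENNReal.ofReal_natCast, ← ENNReal.ofReal_mul N.cast_nonneg, mul_left_comm]
  have hlim : Tendsto (fun N : ℕ => ENNReal.ofReal (K * (N * ((v - u) / N) ^ β))) atTop (𝓝 0) := by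
    rw [← ENNReal.ofReal_zero, ← mul_zero K]
    exact ENNReal.tendsto_ofReal
      ((tendsto_natCast_mul_div_rpow hβ (sub_nonneg.2 huv.le)).const_mul K)
  exact ge_of_tendsto hlim hbound_N

end ConditionalIncrements

section Filtration

variable {Ω E : Type*} [NormedAddCommGroup E] [NormedSpace ℝ E] [CompleteSpace E]
  {m0 : MeasurableSpace Ω} {P : Measure Ω} {p : ℝ≥0∞} {ℱ : Filtration ℝ m0} {Z : ℝ → Ω → E}
  {T : ℝ}

theorem condExp_sub_eq_zero_of_lagged_bound (hp : 1 ≤ p) {M α β c : ℝ} (hM : 0 ≤ M)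
    (hα : 0 ≤ α) (hβ : 1 < β) (hc : 0 ≤ c) (hint : ∀ r, 0 ≤ r → r ≤ T → Integrable (Z r) P)
    (hbound : ∀ s u v, 0 ≤ s → s < u → u < v → v ≤ T → M * (v - u) ≤ u - s →
      eLpNorm (P[Z v - Z u | ℱ s]) p P ≤ ENNReal.ofReal (c * (u - s) ^ (-α) * (v - u) ^ β)) :
    ∀ s u v, 0 ≤ s → s < u → u < v → v ≤ T → P[Z v - Z u | ℱ s] =ᵐ[P] 0 := by
  intro s u v hs hsu huv hvT
  have hus : 0 < u - s := sub_pos.2 hsu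
  -- pieces of `[u, v]` of length at most `(u - s) / (M + 1)` satisfy the lag condition
  refine condExp_sub_eq_zero_of_eLpNorm_condExp_le_rpow (K := c * (u - s) ^ (-α)) (ℱ.le s) hp
    huv hβ (div_pos hus (by linarith : 0 < M + 1))
    (fun r hr => hint r (hs.trans (hsu.le.trans hr.1)) (hr.2.trans hvT)) ?_
  intro u' v' hu' huv' hv' hδ
  have hlagged : M * (v' - u') ≤ u' - s :=
    calc M * (v' - u') ≤ (M + 1) * ((u - s) / (M + 1)) := by gcongr; linarith
      _ = u - s := mul_div_cancel₀ _ (by linarith)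
      _ ≤ u' - s := by linarith
  have hmono : (u' - s) ^ (-α) ≤ (u - s) ^ (-α) :=
    Real.rpow_le_rpow_of_nonpos hus (by linarith) (neg_nonpos.2 hα)
  refine (hbound s u' v' hs (hsu.trans_le hu') huv' (hv'.trans hvT) hlagged).trans
    (ENNReal.ofReal_le_ofReal ?_)
  gcongr

theorem condExp_sub_eq_zero_of_eLpNorm_sub_le_rpow (hp : 1 ≤ p) {c e : ℝ} (he : 0 < e)
    (hint : ∀ r, 0 ≤ r → r ≤ T → Integrable (Z r) P)
    (hlag : ∀ s u v, 0 ≤ s → s < u → u < v → v ≤ T → P[Z v - Z u | ℱ s] =ᵐ[P] 0)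
    (hpath : ∀ u v, 0 ≤ u → u < v → v ≤ T →
      eLpNorm (Z v - Z u) p P ≤ ENNReal.ofReal (c * (v - u) ^ e)) :
    ∀ s t, 0 ≤ s → s < t → t ≤ T → P[Z t - Z s | ℱ s] =ᵐ[P] 0 := by
  intro s t hs hst htT
  refine (eLpNorm_eq_zero_iff ((stronglyMeasurable_condExp.mono (ℱ.le s)).aestronglyMeasurable)
    (zero_lt_one.trans_le hp).ne').1 (le_antisymm ?_ zero_le)
  have hbound : ∀ᶠ δ in 𝓝[>] 0, eLpNorm (P[Z t - Z s | ℱ s]) p P ≤ ENNReal.ofReal (c * δ ^ e) := by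
    filter_upwards [Ioo_mem_nhdsGT (sub_pos.2 hst)] with δ ⟨hδ, hδt⟩
    have hsu : s < s + δ := by linarith
    have hut : s + δ < t := by linarith
    have hsplit : Z t - Z s = (Z (s + δ) - Z s) + (Z t - Z (s + δ)) := by abel
    have hint' : ∀ r, s ≤ r → r ≤ t → Integrable (Z r) P :=
      fun r hr hrt => hint r (hs.trans hr) (hrt.trans htT)
    have hce : P[Z t - Z s | ℱ s] =ᵐ[P] P[Z (s + δ) - Z s | ℱ s] := by
      rw [hsplit]
      refine (condExp_add ((hint' _ hsu.le hut.le).sub (hint' s le_rfl hst.le))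
        ((hint' t hst.le le_rfl).sub (hint' _ hsu.le hut.le)) _).trans ?_
      filter_upwards [hlag s (s + δ) t hs hsu hut htT] with ω hω
      simp [hω]
    calc eLpNorm (P[Z t - Z s | ℱ s]) p P = eLpNorm (P[Z (s + δ) - Z s | ℱ s]) p P :=
          eLpNorm_congr_ae hce
      _ ≤ eLpNorm (Z (s + δ) - Z s) p P := eLpNorm_condExp_le_eLpNorm _ hp
      _ ≤ ENNReal.ofReal (c * δ ^ e) := by
          simpa using hpath s (s + δ) hs hsu (hut.le.trans htT)
  have hlim : Tendsto (fun δ : ℝ => ENNReal.ofReal (c * δ ^ e)) (𝓝[>] 0) (𝓝 0) := by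
    have hcont : Tendsto (fun δ : ℝ => δ ^ e) (𝓝[>] 0) (𝓝 (0 ^ e)) :=
      (Real.continuousAt_rpow_const 0 e (Or.inr he.le)).tendsto.mono_left nhdsWithin_le_nhds
    rw [Real.zero_rpow he.ne'] at hcont
    simpa using ENNReal.tendsto_ofReal (hcont.const_mul c)
  exact ge_of_tendsto hlim hbound

end Filtration

section Orthogonality

variable {Ω E : Type*} [NormedAddCommGroup E] [InnerProductSpace ℝ E] [CompleteSpace E]
  {m m0 : MeasurableSpace Ω} {P : Measure Ω} [IsFiniteMeasure P]

lemma integral_inner_eq_zero_of_condExp_eq_zero (hm : m ≤ m0) {X Y : Ω → E}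
    (hX : StronglyMeasurable[m] X) (hXY : Integrable (fun ω => ⟪X ω, Y ω⟫_ℝ) P)
    (hY : Integrable Y P) (hY0 : P[Y | m] =ᵐ[P] 0) :
    ∫ ω, ⟪X ω, Y ω⟫_ℝ ∂P = 0 := by
  rw [← integral_condExp hm]
  refine (integral_congr_ae ?_).trans (integral_zero Ω ℝ)
  have hpull := condExp_bilin_of_stronglyMeasurable_left (innerSL ℝ) hX hXY hY
  filter_upwards [hpull, hY0] with ω hω hω0
  exact hω.trans (by simp [hω0])

lemma integral_norm_add_sq_of_condExp_eq_zero (hm : m ≤ m0) {X Y : Ω → E}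
    (hXm : StronglyMeasurable[m] X) (hX : MemLp X 2 P) (hY : MemLp Y 2 P)
    (hY0 : P[Y | m] =ᵐ[P] 0) :
    ∫ ω, ‖X ω + Y ω‖ ^ 2 ∂P = ∫ ω, ‖X ω‖ ^ 2 ∂P + ∫ ω, ‖Y ω‖ ^ 2 ∂P := by
  have hXY : Integrable (fun ω => ⟪X ω, Y ω⟫_ℝ) P :=
    memLp_one_iff_integrable.1 <| hX.of_bilin (fun x y => ⟪x, y⟫_ℝ) 1 hY
      (hX.aestronglyMeasurable.inner hY.aestronglyMeasurable)
      (ae_of_all _ fun ω => by simpa using nnnorm_inner_le_nnnorm (𝕜 := ℝ) (X ω) (Y ω))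
  have hX2 := (memLp_two_iff_integrable_sq_norm hX.aestronglyMeasurable).1 hX
  have hY2 := (memLp_two_iff_integrable_sq_norm hY.aestronglyMeasurable).1 hY
  simp_rw [norm_add_sq_real]
  rw [integral_add (f := fun ω => ‖X ω‖ ^ 2 + 2 * ⟪X ω, Y ω⟫_ℝ) (hX2.add (hXY.const_mul 2)) hY2,
    integral_add hX2 (hXY.const_mul 2), integral_const_mul,
    integral_inner_eq_zero_of_condExp_eq_zero hm hXm hXY (hY.integrable one_le_two) hY0]
  ring

end Orthogonality

section Vanishing

variable {Ω E : Type*} [NormedAddCommGroup E] [InnerProductSpace ℝ E] [CompleteSpace E]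
  {m0 : MeasurableSpace Ω} {P : Measure Ω} [IsFiniteMeasure P] {ℱ : Filtration ℝ m0}
  {Z : ℝ → Ω → E} {T c e : ℝ}

lemma integral_norm_sq_uniformGrid_le (hc : 0 ≤ c) (hZ0 : Z 0 = 0)
    (hadapt : ∀ r, 0 ≤ r → r ≤ T → StronglyMeasurable[ℱ r] (Z r))
    (hmem : ∀ r, 0 ≤ r → r ≤ T → MemLp (Z r) 2 P)
    (hmart : ∀ s t, 0 ≤ s → s < t → t ≤ T → P[Z t - Z s | ℱ s] =ᵐ[P] 0)
    (hpath : ∀ u v, 0 ≤ u → u < v → v ≤ T →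
      eLpNorm (Z v - Z u) 2 P ≤ ENNReal.ofReal (c * (v - u) ^ e))
    {t : ℝ} (ht : 0 < t) (htT : t ≤ T) (n : ℕ) :
    ∀ k ≤ n, ∫ ω, ‖Z (uniformGrid 0 t n k) ω‖ ^ 2 ∂P ≤ k * (c * (t / n) ^ e) ^ 2 := by
  set τ := uniformGrid 0 t n
  have hτT : ∀ k ≤ n, 0 ≤ τ k ∧ τ k ≤ T := fun k hk =>
    ⟨(uniformGrid_mem_Icc ht.le hk).1, (uniformGrid_mem_Icc ht.le hk).2.trans htT⟩
  intro k
  induction k with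
  | zero => simp [τ, hZ0]
  | succ k ih =>
    intro hk
    obtain ⟨h0, hT⟩ := hτT k (by omega)
    obtain ⟨h0', hT'⟩ := hτT (k + 1) hk
    have hmesh : τ (k + 1) - τ k = t / n := by
      simpa using uniformGrid_succ_sub (a := 0) (b := t) (N := n) k
    have hlt : τ k < τ (k + 1) := by
      rw [← sub_pos, hmesh]
      exact div_pos ht (Nat.cast_pos.2 (by omega))
    have hpyth := integral_norm_add_sq_of_condExp_eq_zero (ℱ.le _) (hadapt _ h0 hT) (hmem _ h0 hT)
      ((hmem _ h0' hT').sub (hmem _ h0 hT)) (hmart _ _ h0 hlt hT')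
    have hinc := integral_norm_sq_le_of_eLpNorm_le ((hmem _ h0' hT').sub (hmem _ h0 hT))
      (by positivity) (hmesh ▸ hpath _ _ h0 hlt hT')
    simp only [Pi.sub_apply, add_sub_cancel] at hpyth hinc
    rw [hpyth]
    push_cast
    linarith [ih (by omega)]

theorem ae_eq_zero_of_condExp_sub_eq_zero (hc : 0 ≤ c) (he : 1 / 2 < e) (hZ0 : Z 0 = 0)
    (hadapt : ∀ r, 0 ≤ r → r ≤ T → StronglyMeasurable[ℱ r] (Z r))
    (hmem : ∀ r, 0 ≤ r → r ≤ T → MemLp (Z r) 2 P)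
    (hmart : ∀ s t, 0 ≤ s → s < t → t ≤ T → P[Z t - Z s | ℱ s] =ᵐ[P] 0)
    (hpath : ∀ u v, 0 ≤ u → u < v → v ≤ T →
      eLpNorm (Z v - Z u) 2 P ≤ ENNReal.ofReal (c * (v - u) ^ e)) :
    ∀ t, 0 ≤ t → t ≤ T → Z t =ᵐ[P] 0 := by
  intro t ht htT
  rcases ht.eq_or_lt with rfl | ht
  · rw [hZ0]
  have hbound : ∀ᶠ n : ℕ in atTop,
      ∫ ω, ‖Z t ω‖ ^ 2 ∂P ≤ c ^ 2 * (n * (t / n) ^ (2 * e)) := by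
    filter_upwards [eventually_gt_atTop 0] with n hn
    have := integral_norm_sq_uniformGrid_le hc hZ0 hadapt hmem hmart hpath ht htT n n le_rfl
    rw [uniformGrid_self hn.ne'] at this
    convert this using 1
    rw [mul_pow, ← Real.rpow_mul_natCast (by positivity), mul_comm e]
    push_cast
    ring
  have hlim : Tendsto (fun n : ℕ => c ^ 2 * (n * (t / n) ^ (2 * e))) atTop (𝓝 0) := by
    simpa using (tendsto_natCast_mul_div_rpow (by linarith) ht.le).const_mul (c ^ 2)
  have hzero : ∫ ω, ‖Z t ω‖ ^ 2 ∂P = 0 :=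
    le_antisymm (ge_of_tendsto hlim hbound) (integral_nonneg fun _ => by positivity)
  have hsq := (integral_eq_zero_iff_of_nonneg (fun ω => by positivity)
    ((memLp_two_iff_integrable_sq_norm (hmem t ht.le htT).1).1 (hmem t ht.le htT))).1 hzero
  filter_upwards [hsq] with ω hω
  simpa using hω

end Vanishing

section SewingRemainder

variable {Ω E : Type*} [NormedAddCommGroup E] {m0 : MeasurableSpace Ω} {P : Measure Ω}
  {p : ℝ≥0∞} {T : ℝ} {A : ℝ → ℝ → Ω → E} {𝒜 𝒜' : ℝ → Ω → E}

def sewingRemainder (𝒜 : ℝ → Ω → E) (A : ℝ → ℝ → Ω → E) (u v : ℝ) : Ω → E :=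
  fun ω => 𝒜 v ω - 𝒜 u ω - A u v ω

lemma sewingRemainder_sub_sewingRemainder (u v : ℝ) :
    sewingRemainder 𝒜 A u v - sewingRemainder 𝒜' A u v = (𝒜 - 𝒜') v - (𝒜 - 𝒜') u := by
  ext ω
  simp only [sewingRemainder, Pi.sub_apply]
  abel

lemma memLp_sewingRemainder (h𝒜 : ∀ r, 0 ≤ r → r ≤ T → MemLp (𝒜 r) p P)
    (hA : ∀ s t, 0 ≤ s → s ≤ t → t ≤ T → MemLp (A s t) p P) {u v : ℝ} (hu : 0 ≤ u)
    (huv : u ≤ v) (hvT : v ≤ T) : MemLp (sewingRemainder 𝒜 A u v) p P :=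
  ((h𝒜 v (hu.trans huv) hvT).sub (h𝒜 u hu (huv.trans hvT))).sub (hA u v hu huv hvT)

lemma eLpNorm_sub_increment_le (hp : 1 ≤ p) {c₂ c₃ c₂' c₃' e₁ e₂ : ℝ} (hc₂ : 0 ≤ c₂)
    (hc₃ : 0 ≤ c₃) (hc₂' : 0 ≤ c₂') (hc₃' : 0 ≤ c₃')
    (h𝒜 : ∀ r, 0 ≤ r → r ≤ T → MemLp (𝒜 r) p P) (h𝒜' : ∀ r, 0 ≤ r → r ≤ T → MemLp (𝒜' r) p P)
    (hA : ∀ s t, 0 ≤ s → s ≤ t → t ≤ T → MemLp (A s t) p P)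
    (hii : ∀ u v, 0 ≤ u → u < v → v ≤ T → eLpNorm (sewingRemainder 𝒜 A u v) p P
      ≤ ENNReal.ofReal (c₂ * (v - u) ^ e₁ + c₃ * (v - u) ^ e₂))
    (hii' : ∀ u v, 0 ≤ u → u < v → v ≤ T → eLpNorm (sewingRemainder 𝒜' A u v) p P
      ≤ ENNReal.ofReal (c₂' * (v - u) ^ e₁ + c₃' * (v - u) ^ e₂)) :
    ∀ u v, 0 ≤ u → u < v → v ≤ T → eLpNorm ((𝒜 - 𝒜') v - (𝒜 - 𝒜') u) p P ≤ ENNReal.ofReal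
      (((c₂ + c₂') * T ^ (e₁ - min e₁ e₂) + (c₃ + c₃') * T ^ (e₂ - min e₁ e₂))
        * (v - u) ^ min e₁ e₂) := by
  intro u v hu huv hvT
  have hδ : 0 < v - u := sub_pos.2 huv
  rw [← sewingRemainder_sub_sewingRemainder]
  refine (eLpNorm_sub_le_ofReal_add (memLp_sewingRemainder h𝒜 hA hu huv.le hvT).1
    (memLp_sewingRemainder h𝒜' hA hu huv.le hvT).1 hp (by positivity) (by positivity)
    (hii u v hu huv hvT) (hii' u v hu huv hvT)).trans (ENNReal.ofReal_le_ofReal ?_)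
  calc _ = (c₂ + c₂') * (v - u) ^ e₁ + (c₃ + c₃') * (v - u) ^ e₂ := by ring
    _ ≤ _ := add_mul_rpow_le_mul_rpow_min (by positivity) (by positivity) hδ (by linarith)

variable [NormedSpace ℝ E] [CompleteSpace E] [IsFiniteMeasure P]

lemma eLpNorm_condExp_sub_increment_le (ℱ : Filtration ℝ m0) (hp : 1 ≤ p) {M α β c₁ c₁' : ℝ}
    (hc₁ : 0 ≤ c₁) (hc₁' : 0 ≤ c₁')
    (h𝒜 : ∀ r, 0 ≤ r → r ≤ T → MemLp (𝒜 r) p P) (h𝒜' : ∀ r, 0 ≤ r → r ≤ T → MemLp (𝒜' r) p P)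
    (hA : ∀ s t, 0 ≤ s → s ≤ t → t ≤ T → MemLp (A s t) p P)
    (hi : ∀ s u v, 0 ≤ s → s < u → u < v → v ≤ T → M * (v - u) ≤ u - s →
      eLpNorm (P[sewingRemainder 𝒜 A u v | ℱ s]) p P
        ≤ ENNReal.ofReal (c₁ * (u - s) ^ (-α) * (v - u) ^ β))
    (hi' : ∀ s u v, 0 ≤ s → s < u → u < v → v ≤ T → M * (v - u) ≤ u - s →
      eLpNorm (P[sewingRemainder 𝒜' A u v | ℱ s]) p P
        ≤ ENNReal.ofReal (c₁' * (u - s) ^ (-α) * (v - u) ^ β)) :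
    ∀ s u v, 0 ≤ s → s < u → u < v → v ≤ T → M * (v - u) ≤ u - s →
      eLpNorm (P[(𝒜 - 𝒜') v - (𝒜 - 𝒜') u | ℱ s]) p P
        ≤ ENNReal.ofReal ((c₁ + c₁') * (u - s) ^ (-α) * (v - u) ^ β) := by
  intro s u v hs hsu huv hvT hMuv
  have hu : 0 ≤ u := hs.trans hsu.le
  have hint : ∀ 𝒜 : ℝ → Ω → E, (∀ r, 0 ≤ r → r ≤ T → MemLp (𝒜 r) p P) →
      Integrable (sewingRemainder 𝒜 A u v) P :=
    fun 𝒜 h𝒜 => (memLp_sewingRemainder h𝒜 hA hu huv.le hvT).integrable hp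
  rw [← sewingRemainder_sub_sewingRemainder, eLpNorm_congr_ae (condExp_sub (hint 𝒜 h𝒜)
    (hint 𝒜' h𝒜') _), add_mul, add_mul]
  have hsu' : 0 < u - s := sub_pos.2 hsu
  have hvu : 0 < v - u := sub_pos.2 huv
  exact eLpNorm_sub_le_ofReal_add (stronglyMeasurable_condExp.mono (ℱ.le s)).aestronglyMeasurable
    (stronglyMeasurable_condExp.mono (ℱ.le s)).aestronglyMeasurable hp (by positivity)
    (by positivity) (hi s u v hs hsu huv hvT hMuv) (hi' s u v hs hsu huv hvT hMuv)

end SewingRemainder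

theorem generalized_stochastic_sewing_uniqueness_general
    {Ω : Type*} {m0 : MeasurableSpace Ω} (P : Measure Ω) [IsProbabilityMeasure P]
    (ℱ : Filtration ℝ m0) (T : ℝ) (hT : 0 < T) (d : ℕ)
    (m M α β1 β2 : ℝ)
    (hm : 2 ≤ m) (hM : 0 ≤ M) (hα : 0 ≤ α)
    (hβ1 : 1 < β1) (hβ2 : 1 / 2 < β2) (hβ1α : 1 / 2 < β1 - α)
    (A : ℝ → ℝ → Ω → EuclideanSpace ℝ (Fin d))
    (hAmem : ∀ s t : ℝ, 0 ≤ s → s ≤ t → t ≤ T → MemLp (A s t) (ENNReal.ofReal m) P)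
    -- the two candidate sewing processes
    (𝒜 𝒜' : ℝ → Ω → EuclideanSpace ℝ (Fin d))
    (h0 : 𝒜 0 = 0) (h0' : 𝒜' 0 = 0)
    (hmeas : ∀ t : ℝ, 0 ≤ t → t ≤ T →
      StronglyMeasurable[ℱ t] (𝒜 t) ∧ MemLp (𝒜 t) (ENNReal.ofReal m) P)
    (hmeas' : ∀ t : ℝ, 0 ≤ t → t ≤ T →
      StronglyMeasurable[ℱ t] (𝒜' t) ∧ MemLp (𝒜' t) (ENNReal.ofReal m) P)
    (C1 C2 C3 C1' C2' C3' : ℝ)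
    (hC1 : 0 ≤ C1) (hC2 : 0 ≤ C2) (hC3 : 0 ≤ C3)
    (hC1' : 0 ≤ C1') (hC2' : 0 ≤ C2') (hC3' : 0 ≤ C3')
    (hi : ∀ t0 t1 t2 : ℝ, 0 ≤ t0 → t0 < t1 → t1 < t2 → t2 ≤ T → M * (t2 - t1) ≤ t1 - t0 →
      eLpNorm (P[fun ω => 𝒜 t2 ω - 𝒜 t1 ω - A t1 t2 ω | ℱ t0]) (ENNReal.ofReal m) P
        ≤ ENNReal.ofReal (C1 * (t1 - t0) ^ (-α) * (t2 - t1) ^ β1))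
    (hii : ∀ t1 t2 : ℝ, 0 ≤ t1 → t1 < t2 → t2 ≤ T →
      eLpNorm (fun ω => 𝒜 t2 ω - 𝒜 t1 ω - A t1 t2 ω) (ENNReal.ofReal m) P
        ≤ ENNReal.ofReal (C2 * (t2 - t1) ^ (β1 - α) + C3 * (t2 - t1) ^ β2))
    (hi' : ∀ t0 t1 t2 : ℝ, 0 ≤ t0 → t0 < t1 → t1 < t2 → t2 ≤ T → M * (t2 - t1) ≤ t1 - t0 →
      eLpNorm (P[fun ω => 𝒜' t2 ω - 𝒜' t1 ω - A t1 t2 ω | ℱ t0]) (ENNReal.ofReal m) P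
        ≤ ENNReal.ofReal (C1' * (t1 - t0) ^ (-α) * (t2 - t1) ^ β1))
    (hii' : ∀ t1 t2 : ℝ, 0 ≤ t1 → t1 < t2 → t2 ≤ T →
      eLpNorm (fun ω => 𝒜' t2 ω - 𝒜' t1 ω - A t1 t2 ω) (ENNReal.ofReal m) P
        ≤ ENNReal.ofReal (C2' * (t2 - t1) ^ (β1 - α) + C3' * (t2 - t1) ^ β2)) :
    ∀ t : ℝ, 0 ≤ t → t ≤ T → 𝒜 t =ᵐ[P] 𝒜' t := by
  have hp : (1 : ℝ≥0∞) ≤ ENNReal.ofReal m := ENNReal.one_le_ofReal.2 (by linarith)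
  have hm2 : (2 : ℝ≥0∞) ≤ ENNReal.ofReal m := by simpa using ENNReal.ofReal_le_ofReal hm
  have h𝒜 := fun r hr hrT => (hmeas r hr hrT).2
  have h𝒜' := fun r hr hrT => (hmeas' r hr hrT).2
  have hZmem : ∀ r, 0 ≤ r → r ≤ T → MemLp ((𝒜 - 𝒜') r) (ENNReal.ofReal m) P :=
    fun r hr hrT => (h𝒜 r hr hrT).sub (h𝒜' r hr hrT)
  have hZint := fun r hr hrT => (hZmem r hr hrT).integrable hp
  have hlag := condExp_sub_eq_zero_of_lagged_bound hp hM hα hβ1 (add_nonneg hC1 hC1') hZint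
    (eLpNorm_condExp_sub_increment_le ℱ hp hC1 hC1' h𝒜 h𝒜' hAmem hi hi')
  have hpath := eLpNorm_sub_increment_le hp hC2 hC3 hC2' hC3' h𝒜 h𝒜' hAmem hii hii'
  have he : 1 / 2 < min (β1 - α) β2 := lt_min hβ1α hβ2
  have hmart := condExp_sub_eq_zero_of_eLpNorm_sub_le_rpow hp (by linarith) hZint hlag hpath
  have hpath₂ := fun u v hu huv hvT => (eLpNorm_le_eLpNorm_of_exponent_le hm2
    ((hZmem v (hu.trans huv.le) hvT).sub (hZmem u hu (huv.le.trans hvT))).1).trans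
    (hpath u v hu huv hvT)
  intro t ht htT
  filter_upwards [ae_eq_zero_of_condExp_sub_eq_zero (by positivity) he (by simp [h0, h0'])
    (fun r hr hrT => (hmeas r hr hrT).1.sub (hmeas' r hr hrT).1)
    (fun r hr hrT => (hZmem r hr hrT).mono_exponent hm2) hmart hpath₂ t ht htT] with ω hω
  exact sub_eq_zero.1 hω

/-- **Uniqueness in the generalized stochastic sewing lemma** (Theorem 1.1, uniqueness part).
Under the standing hypotheses (H), any two adapted `L^m` processes vanishing at `0` that
satisfy the two sewing estimates (with possibly different constants) coincide almost surely
at every time `t ∈ [0, T]`. -/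
theorem generalized_stochastic_sewing_uniqueness
    {Ω : Type*} {m0 : MeasurableSpace Ω} (P : Measure Ω) [IsProbabilityMeasure P]
    (ℱ : Filtration ℝ m0) (T : ℝ) (hT : 0 < T) (d : ℕ)
    (m Γ1 Γ2 M α β1 β2 : ℝ)
    (hm : 2 ≤ m) (hΓ1 : 0 ≤ Γ1) (hΓ2 : 0 ≤ Γ2) (hM : 0 ≤ M) (hα : 0 ≤ α)
    (hβ1 : 1 < β1) (hβ2 : 1 / 2 < β2) (hβ1α : 1 / 2 < β1 - α)
    (A : ℝ → ℝ → Ω → EuclideanSpace ℝ (Fin d))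
    (hA0 : ∀ s, A s s = 0)
    (hAmeas : ∀ s t : ℝ, 0 ≤ s → s ≤ t → t ≤ T → StronglyMeasurable[ℱ t] (A s t))
    (hAmem : ∀ s t : ℝ, 0 ≤ s → s ≤ t → t ≤ T → MemLp (A s t) (ENNReal.ofReal m) P)
    (hH1 : ∀ t0 t1 t2 t3 : ℝ, 0 ≤ t0 → t0 < t1 → t1 < t2 → t2 < t3 → t3 ≤ T →
      M * (t3 - t1) ≤ t1 - t0 →
      eLpNorm (P[fun ω => A t1 t3 ω - A t1 t2 ω - A t2 t3 ω | ℱ t0]) (ENNReal.ofReal m) P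
        ≤ ENNReal.ofReal (Γ1 * (t1 - t0) ^ (-α) * (t3 - t1) ^ β1))
    (hH2 : ∀ t0 t1 t2 : ℝ, 0 ≤ t0 → t0 < t1 → t1 < t2 → t2 ≤ T →
      eLpNorm (fun ω => A t0 t2 ω - A t0 t1 ω - A t1 t2 ω) (ENNReal.ofReal m) P
        ≤ ENNReal.ofReal (Γ2 * (t2 - t0) ^ β2))
    -- the two candidate sewing processes
    (𝒜 𝒜' : ℝ → Ω → EuclideanSpace ℝ (Fin d))
    (h0 : 𝒜 0 = 0) (h0' : 𝒜' 0 = 0)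
    (hmeas : ∀ t : ℝ, 0 ≤ t → t ≤ T →
      StronglyMeasurable[ℱ t] (𝒜 t) ∧ MemLp (𝒜 t) (ENNReal.ofReal m) P)
    (hmeas' : ∀ t : ℝ, 0 ≤ t → t ≤ T →
      StronglyMeasurable[ℱ t] (𝒜' t) ∧ MemLp (𝒜' t) (ENNReal.ofReal m) P)
    (C1 C2 C3 C1' C2' C3' : ℝ)
    (hC1 : 0 ≤ C1) (hC2 : 0 ≤ C2) (hC3 : 0 ≤ C3)
    (hC1' : 0 ≤ C1') (hC2' : 0 ≤ C2') (hC3' : 0 ≤ C3')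
    (hi : ∀ t0 t1 t2 : ℝ, 0 ≤ t0 → t0 < t1 → t1 < t2 → t2 ≤ T → M * (t2 - t1) ≤ t1 - t0 →
      eLpNorm (P[fun ω => 𝒜 t2 ω - 𝒜 t1 ω - A t1 t2 ω | ℱ t0]) (ENNReal.ofReal m) P
        ≤ ENNReal.ofReal (C1 * (t1 - t0) ^ (-α) * (t2 - t1) ^ β1))
    (hii : ∀ t1 t2 : ℝ, 0 ≤ t1 → t1 < t2 → t2 ≤ T →
      eLpNorm (fun ω => 𝒜 t2 ω - 𝒜 t1 ω - A t1 t2 ω) (ENNReal.ofReal m) P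
        ≤ ENNReal.ofReal (C2 * (t2 - t1) ^ (β1 - α) + C3 * (t2 - t1) ^ β2))
    (hi' : ∀ t0 t1 t2 : ℝ, 0 ≤ t0 → t0 < t1 → t1 < t2 → t2 ≤ T → M * (t2 - t1) ≤ t1 - t0 →
      eLpNorm (P[fun ω => 𝒜' t2 ω - 𝒜' t1 ω - A t1 t2 ω | ℱ t0]) (ENNReal.ofReal m) P
        ≤ ENNReal.ofReal (C1' * (t1 - t0) ^ (-α) * (t2 - t1) ^ β1))
    (hii' : ∀ t1 t2 : ℝ, 0 ≤ t1 → t1 < t2 → t2 ≤ T →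
      eLpNorm (fun ω => 𝒜' t2 ω - 𝒜' t1 ω - A t1 t2 ω) (ENNReal.ofReal m) P
        ≤ ENNReal.ofReal (C2' * (t2 - t1) ^ (β1 - α) + C3' * (t2 - t1) ^ β2)) :
    ∀ t : ℝ, 0 ≤ t → t ≤ T → 𝒜 t =ᵐ[P] 𝒜' t :=
  generalized_stochastic_sewing_uniqueness_general P ℱ T hT d m M α β1 β2 hm hM hα hβ1 hβ2 hβ1α A
    hAmem 𝒜 𝒜' h0 h0' hmeas hmeas' C1 C2 C3 C1' C2' C3' hC1 hC2 hC3 hC1' hC2' hC3' hi hii hi' hii'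
end

section
/- Existence of quasi-uniform coarsenings of partitions (Lemma 2.5). Let T > 0 and let π be a partition of [0,T]. Then there exists a partition π' of [0,T] such that π refines π', the mesh satisfies |π'| ≤ 3|π|, and min_{[s,t] ∈ π'} (t − s) ≥ |π'|/3. -/
/-!
Greedy coarsening with `δ = |π|`: starting from `0`, jump to the first point of `π` at distance
at least `δ` from the current one, unless less than `3δ` remains, in which case jump straight
to `T`. Since every increment of `π` is at most `δ`, an ordinary jump has length in `[δ, 2δ]`
and leaves at least `δ` to go, and the final jump has length in `[δ, 3δ]`. Hence all increments
of `π'` lie in `[δ, 3δ]`, which gives both bounds.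
-/

/-- The mesh of a partition `t 0 < t 1 < ⋯ < t N`, i.e. the maximum of the
increments `t (i+1) - t i` for `i < N`. -/
noncomputable def partitionMesh (N : ℕ) (t : ℕ → ℝ) (hN : 0 < N) : ℝ :=
  (Finset.range N).sup' (Finset.nonempty_range_iff.mpr hN.ne') fun i => t (i + 1) - t i

section partitionMesh

variable {N : ℕ} {t : ℕ → ℝ} (hN : 0 < N)

theorem partitionMesh_le_iff {c : ℝ} :
    partitionMesh N t hN ≤ c ↔ ∀ i < N, t (i + 1) - t i ≤ c := by
  simp only [partitionMesh, Finset.sup'_le_iff, Finset.mem_range]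

theorem sub_le_partitionMesh {i : ℕ} (hi : i < N) : t (i + 1) - t i ≤ partitionMesh N t hN :=
  Finset.le_sup' (fun i => t (i + 1) - t i) (Finset.mem_range.mpr hi)

theorem partitionMesh_le_sub (hmono : ∀ i < N, t i ≤ t (i + 1)) :
    partitionMesh N t hN ≤ t N - t 0 := by
  rw [partitionMesh_le_iff, ← Finset.sum_range_sub]
  intro i hi
  exact Finset.single_le_sum (f := fun i => t (i + 1) - t i)
    (fun j hj => sub_nonneg.mpr (hmono j (Finset.mem_range.mp hj))) (Finset.mem_range.mpr hi)

end partitionMesh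

section Coarsening

variable {δ : ℝ} {N : ℕ} {t : ℕ → ℝ}

theorem exists_gt_sub_mem_Icc (hδ : 0 ≤ δ) (hstep : ∀ i < N, t (i + 1) - t i ≤ δ) {i : ℕ}
    (hiN : i < N) (hi : δ ≤ t N - t i) :
    ∃ m, i < m ∧ m ≤ N ∧ t m - t i ∈ Set.Icc δ (2 * δ) := by
  classical
  have hex : ∃ m, i < m ∧ δ ≤ t m - t i := ⟨N, hiN, hi⟩
  obtain ⟨him, hlow⟩ := Nat.find_spec hex
  set m := Nat.find hex
  have hmN : m ≤ N := Nat.find_min' hex ⟨hiN, hi⟩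
  have hprev : t (m - 1) - t i ≤ δ := by
    rcases eq_or_lt_of_le (Nat.le_sub_one_of_lt him) with h | h
    · simpa [← h] using hδ
    · have := Nat.find_min hex (show m - 1 < m by omega)
      exact (not_le.mp (not_and.mp this h)).le
  have hlast : t m - t (m - 1) ≤ δ := by
    simpa [Nat.sub_add_cancel (i.zero_le.trans_lt him)] using hstep (m - 1) (by omega)
  exact ⟨m, him, hmN, hlow, by linarith⟩

theorem exists_subchain_steps_mem_Icc (hδ : 0 < δ) (hstep : ∀ i < N, t (i + 1) - t i ≤ δ)
    (i : ℕ) (hiN : i ≤ N) (hi : δ ≤ t N - t i) :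
    ∃ n > 0, ∃ s : ℕ → ℝ, s 0 = t i ∧ s n = t N ∧ (∀ j ≤ n, ∃ k ≤ N, t k = s j) ∧
      ∀ j < n, s (j + 1) - s j ∈ Set.Icc δ (3 * δ) := by
  by_cases hlast : t N - t i < 3 * δ
  · refine ⟨1, one_pos, fun j => if j = 0 then t i else t N, rfl, rfl, ?_, ?_⟩
    · intro j _
      dsimp only
      split_ifs
      exacts [⟨i, hiN, rfl⟩, ⟨N, le_rfl, rfl⟩]
    · intro j hj
      obtain rfl : j = 0 := by omega
      exact ⟨hi, hlast.le⟩
  · have hiN' : i < N := lt_of_le_of_ne hiN (by rintro rfl; simp at hlast; linarith)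
    obtain ⟨m, him, hmN, hlow, hup⟩ := exists_gt_sub_mem_Icc hδ.le hstep hiN' hi
    obtain ⟨n, hn, s, hs0, hsn, hsub, hsteps⟩ :=
      exists_subchain_steps_mem_Icc hδ hstep m hmN (by linarith)
    refine ⟨n + 1, n.succ_pos, fun j => if j = 0 then t i else s (j - 1), rfl,
      by simpa using hsn, ?_, ?_⟩
    · rintro (_ | j) hj
      · exact ⟨i, hiN, rfl⟩
      · simpa using hsub j (by omega)
    · rintro (_ | j) hj
      · simpa [hs0] using ⟨hlow, by linarith⟩
      · simpa using hsteps j (by omega)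
termination_by N - i

end Coarsening

theorem exists_quasi_uniform_coarsening_general
    (T : ℝ) (N : ℕ) (t : ℕ → ℝ) (hN : 0 < N)
    (ht0 : t 0 = 0) (htN : t N = T) (hmono : ∀ i < N, t i < t (i + 1)) :
    ∃ (N' : ℕ) (t' : ℕ → ℝ) (hN' : 0 < N'),
      t' 0 = 0 ∧ t' N' = T ∧ (∀ j < N', t' j < t' (j + 1)) ∧
      -- `π` refines `π'`: every point of `π'` is a point of `π`
      (∀ j ≤ N', ∃ i ≤ N, t i = t' j) ∧
      partitionMesh N' t' hN' ≤ 3 * partitionMesh N t hN ∧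
      (∀ j < N', partitionMesh N' t' hN' / 3 ≤ t' (j + 1) - t' j) := by
  set δ := partitionMesh N t hN
  have hstep : ∀ i < N, t (i + 1) - t i ≤ δ := fun i hi => sub_le_partitionMesh hN hi
  have hδ : 0 < δ := (sub_pos.mpr (hmono 0 hN)).trans_le (hstep 0 hN)
  have hδT : δ ≤ t N - t 0 := partitionMesh_le_sub hN fun i hi => (hmono i hi).le
  obtain ⟨n, hn, s, hs0, hsn, hsub, hsteps⟩ :=
    exists_subchain_steps_mem_Icc hδ hstep 0 N.zero_le hδT
  have hmesh : partitionMesh n s hn ≤ 3 * δ :=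
    (partitionMesh_le_iff hn).mpr fun j hj => (hsteps j hj).2
  refine ⟨n, s, hn, hs0.trans ht0, hsn.trans htN, fun j hj => ?_, hsub, hmesh, fun j hj => ?_⟩
  · linarith [(hsteps j hj).1]
  · linarith [(hsteps j hj).1]

/-- **Existence of quasi-uniform coarsenings of partitions** (Lemma 2.5). For every
partition `π` of `[0, T]` there is a partition `π'` of `[0, T]` such that `π` refines `π'`,
`|π'| ≤ 3 |π|`, and every increment of `π'` is at least `|π'| / 3`. -/
theorem exists_quasi_uniform_coarsening
    (T : ℝ) (hT : 0 < T) (N : ℕ) (t : ℕ → ℝ) (hN : 0 < N)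
    (ht0 : t 0 = 0) (htN : t N = T) (hmono : ∀ i < N, t i < t (i + 1)) :
    ∃ (N' : ℕ) (t' : ℕ → ℝ) (hN' : 0 < N'),
      t' 0 = 0 ∧ t' N' = T ∧ (∀ j < N', t' j < t' (j + 1)) ∧
      -- `π` refines `π'`: every point of `π'` is a point of `π`
      (∀ j ≤ N', ∃ i ≤ N, t i = t' j) ∧
      partitionMesh N' t' hN' ≤ 3 * partitionMesh N t hN ∧
      (∀ j < N', partitionMesh N' t' hN' / 3 ≤ t' (j + 1) - t' j) :=
  exists_quasi_uniform_coarsening_general T N t hN ht0 htN hmono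
end

section
/- L² bound for increments of the Mandelbrot–van Ness kernel (estimate (3.8) in the paper). Let H ∈ (0,1), H ≠ 1/2. There exists a constant C_H depending only on H such that for all a > 0 and h ≥ 0: ∫_a^∞ ( (h + r)^{H − 1/2} − r^{H − 1/2} )^2 dr ≤ C_H · a^{2H − 2} · h^2. -/
open MeasureTheory

/-! Since `r ↦ r ^ (p - 1)` is decreasing for `p ≤ 1`, the mean value bound gives
`|(h + r) ^ p - r ^ p| ≤ |p| h r ^ (p - 1)`. For `p = H - 1/2 < 1/2` the square of the right-hand
side is `p² h² r ^ (2p - 2)`, whose exponent is below `-1`, so it integrates over `(a, ∞)` to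
`p² h² a ^ (2p - 1) / (1 - 2p)`. -/

lemma abs_add_rpow_sub_rpow_le {p r h : ℝ} (hp : p ≤ 1) (hr : 0 < r) (hh : 0 ≤ h) :
    |(h + r) ^ p - r ^ p| ≤ |p| * h * r ^ (p - 1) := by
  rcases eq_or_ne p 0 with rfl | hp0
  · simp
  have hint : ∫ x in r..(r + h), x ^ (p - 1) = ((r + h) ^ p - r ^ p) / p := by
    have hne : p - 1 ≠ -1 := by intro H; apply hp0; linarith
    have hmem : (0 : ℝ) ∉ Set.uIcc r (r + h) := by
      rw [Set.uIcc_of_le (by linarith)]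
      rintro ⟨h1, -⟩; linarith
    rw [integral_rpow (Or.inr ⟨hne, hmem⟩), sub_add_cancel]
  have hbound : ‖∫ x in r..(r + h), x ^ (p - 1)‖ ≤ r ^ (p - 1) * |r + h - r| := by
    apply intervalIntegral.norm_integral_le_of_norm_le_const
    intro x hx
    rw [Set.uIoc_of_le (by linarith)] at hx
    rw [Real.norm_eq_abs, abs_of_nonneg (Real.rpow_nonneg (by linarith [hx.1]) _)]
    exact Real.rpow_le_rpow_of_nonpos hr hx.1.le (by linarith)
  rw [hint, Real.norm_eq_abs, abs_div, add_sub_cancel_left, abs_of_nonneg hh,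
    div_le_iff₀ (abs_pos.mpr hp0), add_comm r] at hbound
  linarith

lemma sq_add_rpow_sub_rpow_le {p r h : ℝ} (hp : p ≤ 1) (hr : 0 < r) (hh : 0 ≤ h) :
    ((h + r) ^ p - r ^ p) ^ 2 ≤ p ^ 2 * h ^ 2 * r ^ (2 * p - 2) := by
  have hsq : (r ^ (p - 1)) ^ 2 = r ^ (2 * p - 2) := by
    rw [← Real.rpow_natCast, ← Real.rpow_mul hr.le]
    ring_nf
  calc ((h + r) ^ p - r ^ p) ^ 2 = |(h + r) ^ p - r ^ p| ^ 2 := (sq_abs _).symm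
    _ ≤ (|p| * h * r ^ (p - 1)) ^ 2 :=
      pow_le_pow_left₀ (abs_nonneg _) (abs_add_rpow_sub_rpow_le hp hr hh) 2
    _ = p ^ 2 * h ^ 2 * r ^ (2 * p - 2) := by rw [mul_pow, mul_pow, sq_abs, hsq]

lemma integral_Ioi_sq_add_rpow_sub_rpow_le {p a h : ℝ} (hp : p < 1 / 2) (ha : 0 < a)
    (hh : 0 ≤ h) :
    ∫ r in Set.Ioi a, ((h + r) ^ p - r ^ p) ^ 2 ≤ p ^ 2 / (1 - 2 * p) * a ^ (2 * p - 1) * h ^ 2 := by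
  have hexp : 2 * p - 2 < -1 := by linarith
  have hdom : IntegrableOn (fun r : ℝ => p ^ 2 * h ^ 2 * r ^ (2 * p - 2)) (Set.Ioi a) :=
    (integrableOn_Ioi_rpow_of_lt hexp ha).const_mul _
  have hle : ∀ᵐ r ∂volume.restrict (Set.Ioi a),
      ((h + r) ^ p - r ^ p) ^ 2 ≤ p ^ 2 * h ^ 2 * r ^ (2 * p - 2) := by
    filter_upwards [ae_restrict_mem measurableSet_Ioi] with r hr
    exact sq_add_rpow_sub_rpow_le (by linarith) (ha.trans hr) hh
  calc ∫ r in Set.Ioi a, ((h + r) ^ p - r ^ p) ^ 2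
      ≤ ∫ r in Set.Ioi a, p ^ 2 * h ^ 2 * r ^ (2 * p - 2) :=
        integral_mono_of_nonneg (ae_of_all _ fun _ => sq_nonneg _) hdom hle
    _ = p ^ 2 / (1 - 2 * p) * a ^ (2 * p - 1) * h ^ 2 := by
      rw [integral_const_mul, integral_Ioi_rpow_of_lt hexp ha,
        show 2 * p - 2 + 1 = -(1 - 2 * p) by ring, show 2 * p - 1 = -(1 - 2 * p) by ring]
      have : 1 - 2 * p ≠ 0 := by linarith
      field_simp

theorem mvnKernel_increment_L2_bound_general
    (H : ℝ) (hH1 : H < 1) :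
    ∃ C : ℝ, 0 ≤ C ∧
    ∀ a h : ℝ, 0 < a → 0 ≤ h →
      (∫ r in Set.Ioi a, ((h + r) ^ (H - 1 / 2) - r ^ (H - 1 / 2)) ^ (2 : ℕ))
        ≤ C * a ^ (2 * H - 2) * h ^ (2 : ℕ) := by
  have hp : H - 1 / 2 < 1 / 2 := by linarith
  refine ⟨(H - 1 / 2) ^ 2 / (1 - 2 * (H - 1 / 2)),
    div_nonneg (sq_nonneg _) (by linarith), fun a h ha hh => ?_⟩
  rw [show 2 * H - 2 = 2 * (H - 1 / 2) - 1 by ring]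
  exact integral_Ioi_sq_add_rpow_sub_rpow_le hp ha hh

/-- **L² bound for increments of the Mandelbrot–van Ness kernel** (estimate (3.8)). For
`H ∈ (0,1)`, `H ≠ 1/2`, there is a constant `C_H` depending only on `H` such that for all
`a > 0` and `h ≥ 0`:
`∫_a^∞ ((h + r)^{H − 1/2} − r^{H − 1/2})² dr ≤ C_H a^{2H − 2} h²`. -/
theorem mvnKernel_increment_L2_bound
    (H : ℝ) (hH0 : 0 < H) (hH1 : H < 1) (hH : H ≠ 1 / 2) :
    ∃ C : ℝ, 0 ≤ C ∧
    ∀ a h : ℝ, 0 < a → 0 ≤ h →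
      (∫ r in Set.Ioi a, ((h + r) ^ (H - 1 / 2) - r ^ (H - 1 / 2)) ^ (2 : ℕ))
        ≤ C * a ^ (2 * H - 2) * h ^ (2 : ℕ) :=
  mvnKernel_increment_L2_bound_general H hH1
end

section
/- Gaussian exponential moment bound (estimate (4.14) in the paper). Let n ∈ ℕ. There exist constants C_n, c_n > 0 depending only on n such that for every real centered Gaussian random variable Z with standard deviation τ > 0, every a ∈ ℝ and every σ > 0: E[ |Z − a|^n e^{ −(Z − a)² / (2σ²) } ] ≤ C_n τ^{−1} σ^{n+1} exp( − c_n a² / (τ² + σ²) ). -/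
/-!
The exponential series gives `t ^ n ≤ K_n * exp (t ^ 2 / 4)` with `K_n = n! * 4 ^ n + 1`, so
`|u| ^ n * exp (-u ^ 2 / (2 * σ ^ 2))` is at most `K_n * σ ^ n * exp (-u ^ 2 / (4 * σ ^ 2))`.
Averaging `exp (-(x - a) ^ 2 / (2 * s))` against `N(μ, v)` is explicit after completing the
square, giving `√(s / (v + s)) * exp (-(a - μ) ^ 2 / (2 * (v + s)))`; for `s = 2 * σ ^ 2` the
prefactor is at most `2 * σ / τ` and the exponent at most `-a ^ 2 / (4 * (τ ^ 2 + σ ^ 2))`.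
-/

open MeasureTheory ProbabilityTheory Real
open scoped NNReal Nat

lemma integral_exp_neg_quadratic (A B C : ℝ) (hA : 0 < A) :
    ∫ x : ℝ, exp (-(A * x ^ 2 + B * x + C)) = √(π / A) * exp (B ^ 2 / (4 * A) - C) := by
  have complete_square : ∀ x : ℝ, exp (-(A * x ^ 2 + B * x + C))
      = exp (B ^ 2 / (4 * A) - C) * exp (-A * (x + B / (2 * A)) ^ 2) := by
    intro x
    rw [← exp_add]
    congr 1
    field_simp
    ring
  simp_rw [complete_square]
  rw [integral_const_mul, integral_add_right_eq_self (fun y ↦ exp (-A * y ^ 2)),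
    integral_gaussian, mul_comm]

lemma integral_exp_neg_sq_div_gaussianReal (μ a : ℝ) {v : ℝ≥0} (hv : v ≠ 0) {s : ℝ}
    (hs : 0 < s) :
    ∫ x, exp (-(x - a) ^ 2 / (2 * s)) ∂gaussianReal μ v
      = √(s / (v + s)) * exp (-(a - μ) ^ 2 / (2 * (v + s))) := by
  have hv' : (0 : ℝ) < v := by positivity
  set A : ℝ := (v + s) / (2 * v * s) with hA_def
  have hA : 0 < A := by positivity
  have product_of_exps : ∀ x : ℝ, gaussianPDFReal μ v x • exp (-(x - a) ^ 2 / (2 * s))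
      = (√(2 * π * v))⁻¹
        * exp (-(A * x ^ 2 + -(μ / v + a / s) * x + (μ ^ 2 / (2 * v) + a ^ 2 / (2 * s)))) := by
    intro x
    rw [gaussianPDFReal, smul_eq_mul, mul_assoc, ← exp_add, hA_def]
    congr 2
    field_simp
    ring
  simp_rw [integral_gaussianReal_eq_integral_smul hv, product_of_exps]
  rw [integral_const_mul, integral_exp_neg_quadratic _ _ _ hA, ← mul_assoc, ← sqrt_inv,
    ← sqrt_mul (by positivity), hA_def]
  congr 2
  · field_simp
  · field_simp
    ring

lemma pow_le_mul_exp_sq_div_four (n : ℕ) {t : ℝ} (ht : 0 ≤ t) :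
    t ^ n ≤ (n ! * 4 ^ n + 1) * exp (t ^ 2 / 4) := by
  have h_even : t ^ (2 * n) ≤ n ! * 4 ^ n * exp (t ^ 2 / 4) := by
    have := pow_div_factorial_le_exp (x := t ^ 2 / 4) (by positivity) n
    rw [div_le_iff₀ (by positivity), div_pow, div_le_iff₀ (by positivity), ← pow_mul] at this
    linarith
  have h_am_gm : 2 * t ^ n ≤ 1 + t ^ (2 * n) := by
    rw [pow_mul']
    nlinarith [sq_nonneg (t ^ n - 1)]
  linarith [one_le_exp (x := t ^ 2 / 4) (by positivity), pow_nonneg ht (2 * n)]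

lemma abs_pow_mul_exp_neg_sq_le (n : ℕ) (u : ℝ) {σ : ℝ} (hσ : 0 < σ) :
    |u| ^ n * exp (-u ^ 2 / (2 * σ ^ 2))
      ≤ (n ! * 4 ^ n + 1) * σ ^ n * exp (-u ^ 2 / (4 * σ ^ 2)) := by
  have half_exp : exp (u ^ 2 / (4 * σ ^ 2)) * exp (-u ^ 2 / (2 * σ ^ 2))
      = exp (-u ^ 2 / (4 * σ ^ 2)) := by
    rw [← exp_add]
    congr 1
    field_simp
    ring
  calc |u| ^ n * exp (-u ^ 2 / (2 * σ ^ 2))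
      = σ ^ n * (|u| / σ) ^ n * exp (-u ^ 2 / (2 * σ ^ 2)) := by
        rw [div_pow]
        field_simp
    _ ≤ σ ^ n * ((n ! * 4 ^ n + 1) * exp (u ^ 2 / (4 * σ ^ 2)))
          * exp (-u ^ 2 / (2 * σ ^ 2)) := by
        gcongr
        refine (pow_le_mul_exp_sq_div_four n (by positivity)).trans_eq ?_
        rw [div_pow, sq_abs]
        ring_nf
    _ = (n ! * 4 ^ n + 1) * σ ^ n * exp (-u ^ 2 / (4 * σ ^ 2)) := by
        rw [← half_exp]
        ring

lemma integrable_exp_neg_sq_div {μ : Measure ℝ} [IsFiniteMeasure μ] (a : ℝ) {s : ℝ}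
    (hs : 0 ≤ s) : Integrable (fun x ↦ exp (-(x - a) ^ 2 / (2 * s))) μ := by
  refine Integrable.of_bound (by fun_prop) 1 (ae_of_all _ fun x ↦ ?_)
  rw [norm_of_nonneg (exp_pos _).le, exp_le_one_iff]
  exact div_nonpos_of_nonpos_of_nonneg (neg_nonpos.2 (sq_nonneg _)) (by positivity)

lemma integral_abs_pow_mul_exp_neg_sq_gaussianReal_le (n : ℕ) (μ a : ℝ) {v : ℝ≥0} (hv : v ≠ 0)
    {σ : ℝ} (hσ : 0 < σ) :
    ∫ x, |x - a| ^ n * exp (-(x - a) ^ 2 / (2 * σ ^ 2)) ∂gaussianReal μ v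
      ≤ (n ! * 4 ^ n + 1) * σ ^ n
        * (√(2 * σ ^ 2 / (v + 2 * σ ^ 2)) * exp (-(a - μ) ^ 2 / (2 * (v + 2 * σ ^ 2)))) := by
  have h_four : 4 * σ ^ 2 = 2 * (2 * σ ^ 2) := by ring
  rw [← integral_exp_neg_sq_div_gaussianReal μ a hv (by positivity), ← integral_const_mul]
  refine integral_mono_of_nonneg (ae_of_all _ fun _ ↦ by positivity)
    ((integrable_exp_neg_sq_div a (by positivity)).const_mul _) (ae_of_all _ fun x ↦ ?_)
  simpa only [h_four] using abs_pow_mul_exp_neg_sq_le n (x - a) hσ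

lemma sqrt_mul_exp_neg_sq_div_le (a : ℝ) {τ σ : ℝ} (hτ : 0 < τ) (hσ : 0 < σ) :
    √(2 * σ ^ 2 / (τ ^ 2 + 2 * σ ^ 2)) * exp (-a ^ 2 / (2 * (τ ^ 2 + 2 * σ ^ 2)))
      ≤ 2 * σ / τ * exp (-(1 / 4) * a ^ 2 / (τ ^ 2 + σ ^ 2)) := by
  have sqrt_le : √(2 * σ ^ 2 / (τ ^ 2 + 2 * σ ^ 2)) ≤ 2 * σ / τ := by
    rw [sqrt_le_left (by positivity), div_pow, div_le_div_iff₀ (by positivity) (by positivity)]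
    nlinarith [pow_pos hσ 2, pow_pos hτ 2]
  have exponent_le :
      -a ^ 2 / (2 * (τ ^ 2 + 2 * σ ^ 2)) ≤ -(1 / 4) * a ^ 2 / (τ ^ 2 + σ ^ 2) := by
    rw [div_le_div_iff₀ (by positivity) (by positivity)]
    nlinarith [sq_nonneg a, mul_nonneg (sq_nonneg a) (sq_nonneg σ)]
  gcongr

/-- **Gaussian exponential moment bound** (estimate (4.14)). For each `n ∈ ℕ` there are
`C_n, c_n > 0` depending only on `n` such that for every centered real Gaussian `Z` with
standard deviation `τ > 0`, every `a ∈ ℝ` and `σ > 0`: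
`E[|Z − a|^n e^{−(Z − a)²/(2σ²)}] ≤ C_n τ⁻¹ σ^{n+1} exp(−c_n a²/(τ² + σ²))`. -/
theorem gaussian_exponential_moment_bound
    (n : ℕ) :
    ∃ C c : ℝ, 0 < C ∧ 0 < c ∧
    ∀ (Ω : Type) (m0 : MeasurableSpace Ω) (P : Measure Ω), IsProbabilityMeasure P →
    ∀ (Z : Ω → ℝ) (τ : ℝ), 0 < τ → Measurable Z →
      Measure.map Z P = gaussianReal 0 (Real.toNNReal τ ^ 2) →
    ∀ a σ : ℝ, 0 < σ →
      (∫ ω, |Z ω - a| ^ n * Real.exp (-(Z ω - a) ^ 2 / (2 * σ ^ 2)) ∂P)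
        ≤ C * τ⁻¹ * σ ^ (n + 1) * Real.exp (-c * a ^ 2 / (τ ^ 2 + σ ^ 2)) := by
  set K : ℝ := n ! * 4 ^ n + 1
  refine ⟨2 * K, 1 / 4, by positivity, by norm_num, ?_⟩
  intro Ω _ P _ Z τ hτ hZ hmap a σ hσ
  have hv : τ.toNNReal ^ 2 ≠ 0 := pow_ne_zero _ (toNNReal_pos.2 hτ).ne'
  have hv_coe : ((τ.toNNReal ^ 2 : ℝ≥0) : ℝ) = τ ^ 2 := by simp [hτ.le]
  have moment_le := integral_abs_pow_mul_exp_neg_sq_gaussianReal_le n 0 a hv hσ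
  rw [hv_coe, sub_zero] at moment_le
  calc ∫ ω, |Z ω - a| ^ n * exp (-(Z ω - a) ^ 2 / (2 * σ ^ 2)) ∂P
      = ∫ x, |x - a| ^ n * exp (-(x - a) ^ 2 / (2 * σ ^ 2)) ∂gaussianReal 0 (τ.toNNReal ^ 2) := by
        rw [← hmap, integral_map hZ.aemeasurable (by fun_prop)]
    _ ≤ K * σ ^ n * (2 * σ / τ * exp (-(1 / 4) * a ^ 2 / (τ ^ 2 + σ ^ 2))) :=
        moment_le.trans <|
          mul_le_mul_of_nonneg_left (sqrt_mul_exp_neg_sq_div_le a hτ hσ) (by positivity)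
    _ = 2 * K * τ⁻¹ * σ ^ (n + 1) * exp (-(1 / 4) * a ^ 2 / (τ ^ 2 + σ ^ 2)) := by
        ring
end

section
/- Elementary Gaussian-difference inequality (estimate (4.10) in the paper). For all z, η ∈ ℝ: | e^{−(z − η)²} − e^{−η²} | ≤ 3 |η| e^{−η²/4} |z| + 2 · 1_{ |η| ≤ 2|z| }. -/
/-!
Where `|η| ≤ 2|z|`, both Gaussians lie in `(0, 1]`, so their difference is at most `1`.
Otherwise every `t` between `0` and `z` has `|η|/2 ≤ |t - η| ≤ 3|η|/2`, so the derivative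
`-2(t - η) e^{-(t - η)²}` of `t ↦ e^{-(t - η)²}` is bounded by `3|η| e^{-η²/4}` there, and the
mean value inequality on `[0, z]` gives the first term.
-/

open Real Set

lemma abs_exp_sub_exp_le_one_of_nonpos {x y : ℝ} (hx : x ≤ 0) (hy : y ≤ 0) :
    |exp x - exp y| ≤ 1 := by
  have hx1 : exp x ≤ 1 := exp_le_one_iff.2 hx
  have hy1 : exp y ≤ 1 := exp_le_one_iff.2 hy
  rw [abs_sub_le_iff]
  constructor <;> linarith [exp_pos x, exp_pos y]

lemma hasDerivAt_exp_neg_sq_sub (η t : ℝ) :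
    HasDerivAt (fun t => exp (-(t - η) ^ 2)) (-(2 * (t - η)) * exp (-(t - η) ^ 2)) t := by
  have h := (((hasDerivAt_id t).sub_const η).pow 2).neg.exp
  simpa [mul_comm] using h

lemma norm_deriv_exp_neg_sq_sub_le {t η : ℝ} (ht : 2 * |t| ≤ |η|) :
    ‖-(2 * (t - η)) * exp (-(t - η) ^ 2)‖ ≤ 3 * |η| * exp (-η ^ 2 / 4) := by
  have hlow : |η| / 2 ≤ |t - η| := by
    linarith [abs_sub_abs_le_abs_sub η t, abs_sub_comm η t]
  have hhigh : |t - η| ≤ 3 / 2 * |η| := by linarith [abs_sub t η]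
  have hexp : exp (-(t - η) ^ 2) ≤ exp (-η ^ 2 / 4) := by
    rw [exp_le_exp, ← sq_abs (t - η), ← sq_abs η]
    nlinarith [abs_nonneg η]
  rw [norm_mul, norm_neg, norm_mul, Real.norm_eq_abs, Real.norm_eq_abs, Real.norm_eq_abs,
    abs_two, abs_of_pos (exp_pos _)]
  calc 2 * |t - η| * exp (-(t - η) ^ 2) ≤ 2 * (3 / 2 * |η|) * exp (-η ^ 2 / 4) := by gcongr
    _ = 3 * |η| * exp (-η ^ 2 / 4) := by ring

lemma abs_exp_neg_sq_sub_sub_exp_neg_sq_le {z η : ℝ} (hz : 2 * |z| ≤ |η|) :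
    |exp (-(z - η) ^ 2) - exp (-η ^ 2)| ≤ 3 * |η| * exp (-η ^ 2 / 4) * |z| := by
  have hbound : ∀ t ∈ uIcc 0 z,
      ‖-(2 * (t - η)) * exp (-(t - η) ^ 2)‖ ≤ 3 * |η| * exp (-η ^ 2 / 4) := by
    intro t ht
    have htz : |t| ≤ |z| := by simpa using abs_sub_left_of_mem_uIcc ht
    exact norm_deriv_exp_neg_sq_sub_le (by linarith)
  have h := (convex_uIcc 0 z).norm_image_sub_le_of_norm_hasDerivWithin_le
    (fun t _ => (hasDerivAt_exp_neg_sq_sub η t).hasDerivWithinAt) hbound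
    left_mem_uIcc right_mem_uIcc
  simpa [Real.norm_eq_abs] using h

/-- **Elementary Gaussian-difference inequality** (estimate (4.10)). For all `z, η ∈ ℝ`:
`|e^{−(z − η)²} − e^{−η²}| ≤ 3 |η| e^{−η²/4} |z| + 2 · 1_{|η| ≤ 2|z|}`. -/
theorem gaussian_difference_inequality (z η : ℝ) :
    |Real.exp (-(z - η) ^ 2) - Real.exp (-η ^ 2)|
      ≤ 3 * |η| * Real.exp (-η ^ 2 / 4) * |z|
        + 2 * (if |η| ≤ 2 * |z| then (1 : ℝ) else 0) := by
  have hmain : 0 ≤ 3 * |η| * exp (-η ^ 2 / 4) * |z| := by positivity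
  split_ifs with h
  · have h1 := abs_exp_sub_exp_le_one_of_nonpos (neg_nonpos.2 (sq_nonneg (z - η)))
      (neg_nonpos.2 (sq_nonneg η))
    linarith
  · simpa using abs_exp_neg_sq_sub_sub_exp_neg_sq_le (not_le.1 h).le
end

section
/- Deterministic weak convergence of discretized local-time sums (Corollary 4.4). Let T > 0, H ∈ (0,1), m > 1, and let B ∈ C([0,T], ℝ) be a continuous function. For a partition π of [0,T], define L̃^π_T(a) := Σ_{[s,t] ∈ π, B_s < a < B_t} |B_t − a|^{1/H − 1} for a ∈ ℝ. Let (π_n) be a sequence of partitions of [0,T] such that lim_{n→∞} sup_{[s,t] ∈ π_n} |B_t − B_s| = 0, and suppose there exists ℓ ∈ L^m(ℝ) such that lim_{n→∞} ∫_ℝ | Σ_{[s,t] ∈ π_n, B_s < a < B_t} |B_t − B_s|^{1/H − 1} − ℓ(a) |^m da = 0. Then L̃^{π_n}_T converges to H·ℓ weakly in L^m(ℝ); that is, for every g in the dual space L^{m'}(ℝ) with 1/m + 1/m' = 1, ∫_ℝ L̃^{π_n}_T(a) g(a) da → H ∫_ℝ ℓ(a) g(a) da as n → ∞. -/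
/-!
On an upcrossing interval `(u, v)` the function `a ↦ |v - a|^p`, `p = 1/H - 1`, has integral
`H |v - u|^p (v - u)`, so `L̃^{π_n} - H F_n` (with `F_n` the increment sum converging to `ℓ`) is a
sum of mean-zero pieces, each bounded by `F_n` and living on an interval of length at most the
oscillation of `B` along `π_n`. Tested against a continuous compactly supported `φ`, subtracting
`φ(v)` on each piece bounds the pairing by the modulus of continuity of `φ` at the oscillation times
the mass of `F_n` near the support of `φ`, which Hölder's inequality keeps bounded. As
`L̃^{π_n} - H F_n` is bounded in `L^m` by `F_n`, density of such `φ` in `L^{m'}` extends this to all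
`g`, and `∫ F_n g → ∫ ℓ g` because `F_n → ℓ` in `L^m`.
-/

open MeasureTheory Filter Set Topology Metric
open scoped ENNReal

section Lp

variable {α : Type*} [MeasurableSpace α] {μ : Measure α} {p q : ℝ≥0∞}

lemma abs_integral_mul_le_eLpNorm_mul_eLpNorm [p.HolderConjugate q] {f g : α → ℝ}
    (hf : MemLp f p μ) (hg : MemLp g q μ) :
    |∫ a, f a * g a ∂μ| ≤ (eLpNorm f p μ * eLpNorm g q μ).toReal := by
  have hnorm : eLpNorm (f • g) 1 μ ≤ eLpNorm f p μ * eLpNorm g q μ :=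
    eLpNorm_smul_le_mul_eLpNorm hg.1 hf.1
  calc |∫ a, f a * g a ∂μ| = ‖∫ a, (f • g) a ∂μ‖ := rfl
    _ ≤ ∫ a, ‖(f • g) a‖ ∂μ := norm_integral_le_integral_norm _
    _ = (eLpNorm (f • g) 1 μ).toReal := by
        rw [integral_norm_eq_lintegral_enorm (hf.1.smul hg.1), eLpNorm_one_eq_lintegral_enorm]
    _ ≤ (eLpNorm f p μ * eLpNorm g q μ).toReal :=
        ENNReal.toReal_mono (ENNReal.mul_ne_top hf.2.ne hg.2.ne) hnorm

lemma tendsto_eLpNorm_ofReal_of_tendsto_integral_rpow {m : ℝ} (hm : 0 < m)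
    {u : ℕ → α → ℝ} (hu : ∀ n, MemLp (u n) (ENNReal.ofReal m) μ)
    (h : Tendsto (fun n => ∫ a, |u n a| ^ m ∂μ) atTop (𝓝 0)) :
    Tendsto (fun n => eLpNorm (u n) (ENNReal.ofReal m) μ) atTop (𝓝 0) := by
  have hroot : Tendsto (fun n => (∫ a, |u n a| ^ m ∂μ) ^ m⁻¹) atTop (𝓝 0) := by
    simpa [Real.zero_rpow (inv_ne_zero hm.ne')] using h.rpow_const (Or.inr (inv_nonneg.2 hm.le))
  convert ENNReal.tendsto_ofReal hroot using 1
  · funext n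
    rw [(hu n).eLpNorm_eq_integral_rpow_norm (by simpa using hm) ENNReal.ofReal_ne_top,
      ENNReal.toReal_ofReal hm.le]
    rfl
  · simp

lemma eventually_eLpNorm_le_of_tendsto_eLpNorm_sub (hp : 1 ≤ p) {u : ℕ → α → ℝ} {f : α → ℝ}
    (hu : ∀ n, AEStronglyMeasurable (u n) μ) (hf : AEStronglyMeasurable f μ)
    (h : Tendsto (fun n => eLpNorm (u n - f) p μ) atTop (𝓝 0)) :
    ∀ᶠ n in atTop, eLpNorm (u n) p μ ≤ 1 + eLpNorm f p μ := by
  filter_upwards [h.eventually_le_const zero_lt_one] with n hn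
  calc eLpNorm (u n) p μ = eLpNorm (u n - f + f) p μ := by rw [sub_add_cancel]
    _ ≤ eLpNorm (u n - f) p μ + eLpNorm f p μ := eLpNorm_add_le ((hu n).sub hf) hf hp
    _ ≤ 1 + eLpNorm f p μ := by gcongr

lemma tendsto_integral_mul_of_tendsto_eLpNorm_sub [p.HolderConjugate q] {u : ℕ → α → ℝ}
    {f g : α → ℝ} (hu : ∀ n, MemLp (u n) p μ) (hf : MemLp f p μ) (hg : MemLp g q μ)
    (h : Tendsto (fun n => eLpNorm (u n - f) p μ) atTop (𝓝 0)) :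
    Tendsto (fun n => ∫ a, u n a * g a ∂μ) atTop (𝓝 (∫ a, f a * g a ∂μ)) := by
  rw [tendsto_iff_norm_sub_tendsto_zero]
  have hbound : Tendsto (fun n => (eLpNorm (u n - f) p μ * eLpNorm g q μ).toReal) atTop (𝓝 0) := by
    have := ENNReal.Tendsto.mul_const h (Or.inr hg.2.ne)
    rw [zero_mul] at this
    simpa only [ENNReal.toReal_zero, Function.comp_def] using
      (ENNReal.tendsto_toReal ENNReal.zero_ne_top).comp this
  have hint : ∀ v : α → ℝ, MemLp v p μ → Integrable (fun a => v a * g a) μ :=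
    fun v hv => hv.integrable_mul hg
  refine squeeze_zero (fun _ => norm_nonneg _) (fun n => ?_) hbound
  rw [← integral_sub (hint _ (hu n)) (hint _ hf)]
  simpa [sub_mul] using abs_integral_mul_le_eLpNorm_mul_eLpNorm ((hu n).sub hf) hg

end Lp

lemma tendsto_integral_mul_of_forall_hasCompactSupport {α : Type*} [TopologicalSpace α]
    [NormalSpace α] [R1Space α] [WeaklyLocallyCompactSpace α] [MeasurableSpace α] [BorelSpace α]
    {μ : Measure α} [μ.Regular] {p q : ℝ≥0∞} [p.HolderConjugate q] (hq : q ≠ ∞)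
    {u : ℕ → α → ℝ} (hu : ∀ n, MemLp (u n) p μ) {C : ℝ≥0∞} (hC : C ≠ ∞)
    (hbdd : ∀ᶠ n in atTop, eLpNorm (u n) p μ ≤ C)
    (htest : ∀ φ : α → ℝ, Continuous φ → HasCompactSupport φ →
      Tendsto (fun n => ∫ a, u n a * φ a ∂μ) atTop (𝓝 0))
    {g : α → ℝ} (hg : MemLp g q μ) :
    Tendsto (fun n => ∫ a, u n a * g a ∂μ) atTop (𝓝 0) := by
  rw [Metric.tendsto_nhds]
  intro ε hε
  obtain ⟨η, hη, hCη⟩ := exists_pos_mul_lt (half_pos hε) C.toReal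
  obtain ⟨φ, hφc, hgφ, hφ, hφLp⟩ :=
    hg.exists_hasCompactSupport_eLpNorm_sub_le hq (ENNReal.ofReal_pos.2 hη).ne'
  filter_upwards [hbdd, Metric.tendsto_nhds.1 (htest φ hφ hφc) (ε / 2) (half_pos hε)]
    with n hn hφn
  have hsplit : ∫ a, u n a * g a ∂μ = ∫ a, u n a * (g - φ) a ∂μ + ∫ a, u n a * φ a ∂μ := by
    have hfar : Integrable (fun a => u n a * (g - φ) a) μ := (hu n).integrable_mul (hg.sub hφLp)
    have hnear : Integrable (fun a => u n a * φ a) μ := (hu n).integrable_mul hφLp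
    rw [← integral_add hfar hnear]
    simp [mul_sub]
  have hfar : |∫ a, u n a * (g - φ) a ∂μ| ≤ C.toReal * η := by
    refine (abs_integral_mul_le_eLpNorm_mul_eLpNorm (hu n) (hg.sub hφLp)).trans ?_
    rw [ENNReal.toReal_mul]
    exact mul_le_mul (ENNReal.toReal_mono hC hn) (ENNReal.toReal_le_of_le_ofReal hη.le hgφ)
      ENNReal.toReal_nonneg ENNReal.toReal_nonneg
  rw [Real.dist_eq, sub_zero, hsplit]
  rw [Real.dist_eq, sub_zero] at hφn
  calc _ ≤ |∫ a, u n a * (g - φ) a ∂μ| + |∫ a, u n a * φ a ∂μ| := abs_add_le _ _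
    _ < ε / 2 + ε / 2 := by linarith
    _ = ε := add_halves ε

lemma HasCompactSupport.exists_pos_abs_sub_le_mul_indicator_cthickening {α : Type*}
    [PseudoMetricSpace α] {φ : α → ℝ} (hφc : HasCompactSupport φ) (hφ : Continuous φ) {ε : ℝ}
    (hε : 0 < ε) :
    ∃ δ > 0, ∀ a b, dist a b < δ →
      |φ a - φ b| ≤ ε * (cthickening 1 (tsupport φ)).indicator 1 a := by
  obtain ⟨δ, hδ, hφδ⟩ :=
    Metric.uniformContinuous_iff.1 (hφc.uniformContinuous_of_continuous hφ) ε hε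
  refine ⟨min δ 1, lt_min hδ one_pos, fun a b hab => ?_⟩
  by_cases ha : a ∈ cthickening 1 (tsupport φ)
  · rw [indicator_of_mem ha, Pi.one_apply, mul_one, ← Real.dist_eq]
    exact (hφδ (hab.trans_le (min_le_left _ _))).le
  · have hb : b ∉ tsupport φ := fun hb => ha (mem_cthickening_of_dist_le a b 1 _ hb
      (hab.trans_le (min_le_right _ _)).le)
    have ha' : a ∉ tsupport φ := fun ha' => ha (self_subset_cthickening _ ha')
    simp [image_eq_zero_of_notMem_tsupport ha', image_eq_zero_of_notMem_tsupport hb, ha]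

section Interval

variable {p H u v : ℝ}

lemma setIntegral_Ioo_abs_sub_rpow (hp : -1 < p) (huv : u ≤ v) :
    ∫ a in Ioo u v, |v - a| ^ p = (v - u) ^ (p + 1) / (p + 1) := by
  rw [setIntegral_congr_fun measurableSet_Ioo (g := fun a => (v - a) ^ p)
      fun a ha => by rw [abs_of_pos (sub_pos.2 ha.2)],
    ← integral_Ioc_eq_integral_Ioo, ← intervalIntegral.integral_of_le huv,
    intervalIntegral.integral_comp_sub_left (fun a => a ^ p), sub_self, integral_rpow (Or.inl hp),
    Real.zero_rpow (by linarith), sub_zero]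

lemma abs_abs_sub_rpow_sub_mul_le (hp : 0 ≤ p) (hH : H * (p + 1) = 1) {a : ℝ} (ha : a ∈ Ioo u v) :
    |(|v - a| ^ p - H * |v - u| ^ p)| ≤ |v - u| ^ p := by
  have hH0 : 0 ≤ H := by nlinarith
  have hH1 : H ≤ 1 := by nlinarith
  have hle : |v - a| ^ p ≤ |v - u| ^ p := by
    refine Real.rpow_le_rpow (abs_nonneg _) ?_ hp
    rw [abs_of_pos (sub_pos.2 ha.2), abs_of_pos (sub_pos.2 (ha.1.trans ha.2))]
    linarith [ha.1]
  have h0 : 0 ≤ |v - a| ^ p := by positivity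
  have hc : 0 ≤ H * |v - u| ^ p := by positivity
  rw [abs_le]
  constructor <;> nlinarith

lemma setIntegral_Ioo_abs_sub_rpow_sub_mul (hp : 0 ≤ p) (hH : H * (p + 1) = 1) (u v : ℝ) :
    ∫ a in Ioo u v, (|v - a| ^ p - H * |v - u| ^ p) = 0 := by
  rcases le_or_gt v u with hvu | huv
  · simp [Ioo_eq_empty (not_lt.2 hvu)]
  have hcont : Continuous fun a : ℝ => |v - a| ^ p := by fun_prop (disch := exact hp)
  rw [integral_sub (hcont.integrableOn_Icc.mono_set Ioo_subset_Icc_self)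
      (integrableOn_const measure_Ioo_lt_top.ne),
    setIntegral_Ioo_abs_sub_rpow (by linarith) huv.le, setIntegral_const, measureReal_def,
    Real.volume_Ioo, ENNReal.toReal_ofReal (sub_pos.2 huv).le, smul_eq_mul,
    abs_of_pos (sub_pos.2 huv), Real.rpow_add_one (sub_pos.2 huv).ne']
  rw [eq_one_div_of_mul_eq_one_left hH]
  ring

lemma abs_setIntegral_Ioo_abs_sub_rpow_sub_mul_le (hp : 0 ≤ p) (hH : H * (p + 1) = 1)
    {φ w : ℝ → ℝ} (hφ : Continuous φ) (hw : IntegrableOn w (Ioo u v))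
    (hφw : ∀ a ∈ Ioo u v, |φ a - φ v| ≤ w a) :
    |∫ a in Ioo u v, (|v - a| ^ p - H * |v - u| ^ p) * φ a| ≤
      |v - u| ^ p * ∫ a in Ioo u v, w a := by
  set ψ : ℝ → ℝ := fun a => |v - a| ^ p - H * |v - u| ^ p
  have hint : ∀ χ : ℝ → ℝ, Continuous χ → IntegrableOn χ (Ioo u v) :=
    fun χ hχ => hχ.integrableOn_Icc.mono_set Ioo_subset_Icc_self
  have hcentre : ∫ a in Ioo u v, ψ a * φ a = ∫ a in Ioo u v, ψ a * (φ a - φ v) := by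
    simp_rw [mul_sub]
    rw [integral_sub (hint _ (by fun_prop)) (hint _ (by fun_prop)), integral_mul_const,
      setIntegral_Ioo_abs_sub_rpow_sub_mul hp hH, zero_mul, sub_zero]
  rw [hcentre, ← integral_const_mul]
  refine (abs_integral_le_integral_abs).trans (setIntegral_mono_on (hint _ (by fun_prop)).abs
    (hw.const_mul _) measurableSet_Ioo fun a ha => ?_)
  rw [abs_mul]
  exact mul_le_mul (abs_abs_sub_rpow_sub_mul_le hp hH ha) (hφw a ha) (abs_nonneg _) (by positivity)

end Interval

section Sums

variable {ι : Type*} (p : ℝ) (s : Finset ι) (x y : ι → ℝ)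

/- For a partition `π` with `x i = B_s`, `y i = B_t` on its `i`-th interval `[s, t]`,
`localTimeSum (1/H - 1)` is `L̃^π_T` and `incrementSum (1/H - 1)` is the sum converging to `ℓ`. -/

noncomputable def incrementSum (a : ℝ) : ℝ :=
  ∑ i ∈ s, (Ioo (x i) (y i)).indicator (fun _ => |y i - x i| ^ p) a

noncomputable def localTimeSum (a : ℝ) : ℝ :=
  ∑ i ∈ s, (Ioo (x i) (y i)).indicator (fun a => |y i - a| ^ p) a

variable {p s x y}

lemma incrementSum_nonneg (a : ℝ) : 0 ≤ incrementSum p s x y a :=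
  Finset.sum_nonneg fun _ _ => indicator_nonneg (fun _ _ => by positivity) _

lemma localTimeSum_nonneg (a : ℝ) : 0 ≤ localTimeSum p s x y a :=
  Finset.sum_nonneg fun _ _ => indicator_nonneg (fun _ _ => by positivity) _

lemma localTimeSum_le_incrementSum (hp : 0 ≤ p) (a : ℝ) :
    localTimeSum p s x y a ≤ incrementSum p s x y a := by
  refine Finset.sum_le_sum fun i _ => ?_
  simp only [indicator_apply]
  split_ifs with ha
  · refine Real.rpow_le_rpow (abs_nonneg _) ?_ hp
    rw [abs_of_pos (sub_pos.2 ha.2), abs_of_pos (sub_pos.2 (ha.1.trans ha.2))]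
    linarith [ha.1]
  · rfl

lemma memLp_incrementSum (q : ℝ≥0∞) : MemLp (incrementSum p s x y) q volume :=
  memLp_finsetSum s fun _ _ =>
    memLp_indicator_const q measurableSet_Ioo _ (Or.inr measure_Ioo_lt_top.ne)

lemma memLp_localTimeSum (hp : 0 ≤ p) (q : ℝ≥0∞) : MemLp (localTimeSum p s x y) q volume := by
  have hmeas : Measurable (localTimeSum p s x y) :=
    Finset.measurable_sum s fun _ _ => (Measurable.indicator (by fun_prop) measurableSet_Ioo)
  have hF : MemLp (incrementSum p s x y) q volume := memLp_incrementSum q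
  refine hF.of_le hmeas.aestronglyMeasurable (Eventually.of_forall fun a => ?_)
  rw [Real.norm_of_nonneg (localTimeSum_nonneg a), Real.norm_of_nonneg (incrementSum_nonneg a)]
  exact localTimeSum_le_incrementSum hp a

lemma eLpNorm_localTimeSum_sub_mul_le {H : ℝ} (hp : 0 ≤ p) (hH0 : 0 ≤ H) (hH1 : H ≤ 1)
    (q : ℝ≥0∞) :
    eLpNorm (fun a => localTimeSum p s x y a - H * incrementSum p s x y a) q volume ≤
      eLpNorm (incrementSum p s x y) q volume := by
  refine eLpNorm_mono fun a => ?_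
  have hL : 0 ≤ localTimeSum p s x y a := localTimeSum_nonneg a
  have hF : 0 ≤ incrementSum p s x y a := incrementSum_nonneg a
  have hLF : localTimeSum p s x y a ≤ incrementSum p s x y a := localTimeSum_le_incrementSum hp a
  rw [Real.norm_of_nonneg hF, Real.norm_eq_abs, abs_le]
  constructor <;> nlinarith

lemma integral_localTimeSum_sub_mul_mul (hp : 0 ≤ p) (H : ℝ) {φ : ℝ → ℝ} (hφ : Continuous φ) :
    ∫ a, (localTimeSum p s x y a - H * incrementSum p s x y a) * φ a =
      ∑ i ∈ s, ∫ a in Ioo (x i) (y i), (|y i - a| ^ p - H * |y i - x i| ^ p) * φ a := by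
  have hsum : ∀ a, (localTimeSum p s x y a - H * incrementSum p s x y a) * φ a =
      ∑ i ∈ s, (Ioo (x i) (y i)).indicator
        (fun a => (|y i - a| ^ p - H * |y i - x i| ^ p) * φ a) a := by
    intro a
    simp only [localTimeSum, incrementSum, Finset.mul_sum, ← Finset.sum_sub_distrib,
      Finset.sum_mul]
    refine Finset.sum_congr rfl fun i _ => ?_
    simp only [indicator_apply]
    split_ifs <;> ring
  simp_rw [hsum]
  rw [integral_finsetSum s fun i _ => (integrable_indicator_iff measurableSet_Ioo).2
    ((Continuous.integrableOn_Icc (by fun_prop (disch := exact hp))).mono_set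
      Ioo_subset_Icc_self)]
  exact Finset.sum_congr rfl fun i _ => integral_indicator measurableSet_Ioo

lemma integral_incrementSum_mul {w : ℝ → ℝ} (hw : Integrable w) :
    ∫ a, incrementSum p s x y a * w a =
      ∑ i ∈ s, |y i - x i| ^ p * ∫ a in Ioo (x i) (y i), w a := by
  have hsum : ∀ a, incrementSum p s x y a * w a =
      ∑ i ∈ s, (Ioo (x i) (y i)).indicator (fun a => |y i - x i| ^ p * w a) a := by
    intro a
    simp only [incrementSum, Finset.sum_mul]
    refine Finset.sum_congr rfl fun i _ => ?_
    simp only [indicator_apply]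
    split_ifs <;> ring
  simp_rw [hsum]
  rw [integral_finsetSum s fun i _ => ((hw.const_mul _).indicator measurableSet_Ioo)]
  exact Finset.sum_congr rfl fun i _ => by
    rw [integral_indicator measurableSet_Ioo, integral_const_mul]

lemma abs_integral_localTimeSum_sub_mul_mul_le (hp : 0 ≤ p) {H : ℝ} (hH : H * (p + 1) = 1)
    {φ w : ℝ → ℝ} (hφ : Continuous φ) (hw : Integrable w)
    (hφw : ∀ i ∈ s, ∀ a ∈ Ioo (x i) (y i), |φ a - φ (y i)| ≤ w a) :
    |∫ a, (localTimeSum p s x y a - H * incrementSum p s x y a) * φ a| ≤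
      ∫ a, incrementSum p s x y a * w a := by
  rw [integral_localTimeSum_sub_mul_mul hp H hφ, integral_incrementSum_mul hw]
  exact (Finset.abs_sum_le_sum_abs _ _).trans (Finset.sum_le_sum fun i hi =>
    abs_setIntegral_Ioo_abs_sub_rpow_sub_mul_le hp hH hφ hw.integrableOn (hφw i hi))

end Sums

lemma tendsto_integral_localTimeSum_sub_mul_mul_of_hasCompactSupport {ι : Type*} {p H : ℝ}
    {s : ℕ → Finset ι} {x y : ℕ → ι → ℝ} (hp : 0 ≤ p) (hH : H * (p + 1) = 1)
    (hosc : ∀ δ > 0, ∀ᶠ n in atTop, ∀ i ∈ s n, |y n i - x n i| ≤ δ)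
    {q q' : ℝ≥0∞} [q.HolderConjugate q'] {C : ℝ≥0∞} (hC : C ≠ ∞)
    (hbdd : ∀ᶠ n in atTop, eLpNorm (incrementSum p (s n) (x n) (y n)) q volume ≤ C)
    {φ : ℝ → ℝ} (hφ : Continuous φ) (hφc : HasCompactSupport φ) :
    Tendsto (fun n => ∫ a, (localTimeSum p (s n) (x n) (y n) a -
      H * incrementSum p (s n) (x n) (y n) a) * φ a) atTop (𝓝 0) := by
  set K := cthickening 1 (tsupport φ)
  have hK : IsCompact K := IsCompact.cthickening hφc
  have hKLp : MemLp (K.indicator (1 : ℝ → ℝ)) q' volume :=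
    memLp_indicator_const q' hK.measurableSet (1 : ℝ) (Or.inr hK.measure_lt_top.ne)
  set c := (C * eLpNorm (K.indicator (1 : ℝ → ℝ)) q' volume).toReal
  rw [Metric.tendsto_nhds]
  intro ε hε
  obtain ⟨η, hη, hcη⟩ := exists_pos_mul_lt hε c
  obtain ⟨δ, hδ, hφδ⟩ := hφc.exists_pos_abs_sub_le_mul_indicator_cthickening hφ hη
  filter_upwards [hosc δ hδ, hbdd] with n hn hFn
  have hw : Integrable fun a => η * K.indicator 1 a :=
    (memLp_one_iff_integrable.1 (memLp_indicator_const 1 hK.measurableSet (1 : ℝ)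
      (Or.inr hK.measure_lt_top.ne))).const_mul η
  have hφw : ∀ i ∈ s n, ∀ a ∈ Ioo (x n i) (y n i), |φ a - φ (y n i)| ≤ η * K.indicator 1 a :=
    fun i hi a ha => hφδ a (y n i) <| by
      rw [Real.dist_eq, abs_sub_comm, abs_of_pos (sub_pos.2 ha.2)]
      linarith [ha.1, (abs_le.1 (hn i hi)).2]
  have hHolder : ∫ a, incrementSum p (s n) (x n) (y n) a * K.indicator 1 a ≤ c :=
    (le_abs_self _).trans <|
      (abs_integral_mul_le_eLpNorm_mul_eLpNorm (memLp_incrementSum q) hKLp).trans <|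
      ENNReal.toReal_mono (ENNReal.mul_ne_top hC hKLp.2.ne) (by gcongr)
  rw [Real.dist_eq, sub_zero]
  calc _ ≤ ∫ a, incrementSum p (s n) (x n) (y n) a * (η * K.indicator 1 a) :=
        abs_integral_localTimeSum_sub_mul_mul_le hp hH hφ hw hφw
    _ = η * ∫ a, incrementSum p (s n) (x n) (y n) a * K.indicator 1 a := by
        rw [← integral_const_mul]; simp_rw [mul_left_comm]
    _ ≤ η * c := by gcongr
    _ < ε := by linarith

theorem tendsto_integral_localTimeSum_mul {ι : Type*} {p H : ℝ} {s : ℕ → Finset ι}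
    {x y : ℕ → ι → ℝ} (hp : 0 ≤ p) (hH : H * (p + 1) = 1)
    (hosc : ∀ δ > 0, ∀ᶠ n in atTop, ∀ i ∈ s n, |y n i - x n i| ≤ δ)
    {q q' : ℝ≥0∞} [q.HolderConjugate q'] (hq' : q' ≠ ∞) {ℓ g : ℝ → ℝ} (hℓ : MemLp ℓ q volume)
    (hconv : Tendsto (fun n => eLpNorm (incrementSum p (s n) (x n) (y n) - ℓ) q volume)
      atTop (𝓝 0))
    (hg : MemLp g q' volume) :
    Tendsto (fun n => ∫ a, localTimeSum p (s n) (x n) (y n) a * g a) atTop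
      (𝓝 (H * ∫ a, ℓ a * g a)) := by
  have hH0 : 0 ≤ H := by nlinarith
  have hH1 : H ≤ 1 := by nlinarith
  have hF : ∀ n, MemLp (incrementSum p (s n) (x n) (y n)) q volume := fun n => memLp_incrementSum q
  have hbdd := eventually_eLpNorm_le_of_tendsto_eLpNorm_sub (ENNReal.HolderConjugate.one_le q q')
    (fun n => (hF n).1) hℓ.1 hconv
  have hC : 1 + eLpNorm ℓ q volume ≠ ∞ := ENNReal.add_ne_top.2 ⟨ENNReal.one_ne_top, hℓ.2.ne⟩
  have hdefect : Tendsto (fun n => ∫ a, (localTimeSum p (s n) (x n) (y n) a -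
      H * incrementSum p (s n) (x n) (y n) a) * g a) atTop (𝓝 0) :=
    tendsto_integral_mul_of_forall_hasCompactSupport hq'
      (fun n => (memLp_localTimeSum hp q).sub ((hF n).const_mul H)) hC
      (hbdd.mono fun n hn => (eLpNorm_localTimeSum_sub_mul_le hp hH0 hH1 q).trans hn)
      (fun φ hφ hφc => tendsto_integral_localTimeSum_sub_mul_mul_of_hasCompactSupport (q' := q') hp
        hH hosc hC hbdd hφ hφc) hg
  have hincrement := (tendsto_integral_mul_of_tendsto_eLpNorm_sub hF hℓ hg hconv).const_mul H
  convert hdefect.add hincrement using 2 with n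
  · have hLg : Integrable (fun a => localTimeSum p (s n) (x n) (y n) a * g a) volume :=
      (memLp_localTimeSum hp q).integrable_mul hg
    have hFg : Integrable (fun a => incrementSum p (s n) (x n) (y n) a * g a) volume :=
      (hF n).integrable_mul hg
    simp_rw [sub_mul, mul_assoc]
    rw [integral_sub hLg (hFg.const_mul H), integral_const_mul, sub_add_cancel]
  · rw [zero_add]

theorem discretized_local_time_weak_convergence_general
    (H m : ℝ) (hH0 : 0 < H) (hH1 : H < 1) (hm : 1 < m)
    (B : ℝ → ℝ)
    -- the sequence of partitions `π_n` of `[0, T]`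
    (N : ℕ → ℕ) (t : ℕ → ℕ → ℝ)
    -- the oscillation of `B` along `π_n` tends to `0`
    (hosc : ∀ ε : ℝ, 0 < ε → ∃ n0 : ℕ, ∀ n ≥ n0, ∀ i < N n,
      |B (t n (i + 1)) - B (t n i)| ≤ ε)
    -- `ℓ ∈ L^m(ℝ)` and `Σ |B_t − B_s|^{1/H−1} 1_{B_s < a < B_t} → ℓ` in `L^m(ℝ)`
    (ℓ : ℝ → ℝ) (hℓ : MemLp ℓ (ENNReal.ofReal m) volume)
    (hconv : Tendsto
      (fun n => ∫ a : ℝ,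
        |(∑ i ∈ Finset.range (N n),
            if B (t n i) < a ∧ a < B (t n (i + 1))
            then |B (t n (i + 1)) - B (t n i)| ^ (1 / H - 1) else 0) - ℓ a| ^ m)
      atTop (nhds 0))
    -- the dual exponent and a test function `g ∈ L^{m'}(ℝ)`
    (m' : ℝ) (hm' : 1 / m + 1 / m' = 1)
    (g : ℝ → ℝ) (hg : MemLp g (ENNReal.ofReal m') volume) :
    Tendsto
      (fun n => ∫ a : ℝ,
        (∑ i ∈ Finset.range (N n),
          if B (t n i) < a ∧ a < B (t n (i + 1))
          then |B (t n (i + 1)) - a| ^ (1 / H - 1) else 0) * g a)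
      atTop (nhds (H * ∫ a : ℝ, ℓ a * g a)) := by
  have hp : 0 ≤ 1 / H - 1 := by rw [sub_nonneg, le_div_iff₀ hH0]; linarith
  have hHp : H * (1 / H - 1 + 1) = 1 := by rw [sub_add_cancel, mul_one_div_cancel hH0.ne']
  have := (Real.holderConjugate_iff.2 ⟨hm, by simpa only [one_div] using hm'⟩).ennrealOfReal
  have hosc' : ∀ δ > 0, ∀ᶠ n in atTop, ∀ i ∈ Finset.range (N n),
      |B (t n (i + 1)) - B (t n i)| ≤ δ := fun δ hδ => by
    obtain ⟨n0, h⟩ := hosc δ hδ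
    exact eventually_atTop.2 ⟨n0, fun n hn i hi => h n hn i (Finset.mem_range.1 hi)⟩
  have hconv' := tendsto_eLpNorm_ofReal_of_tendsto_integral_rpow (by linarith)
    (fun n => (memLp_incrementSum _).sub hℓ)
    (by simpa only [incrementSum, indicator_apply, mem_Ioo, Pi.sub_apply] using hconv)
  simpa only [localTimeSum, indicator_apply, mem_Ioo] using
    tendsto_integral_localTimeSum_mul hp hHp hosc' ENNReal.ofReal_ne_top hℓ hconv' hg

/-- **Deterministic weak convergence of discretized local-time sums** (Corollary 4.4).
Let `B ∈ C([0,T], ℝ)`, `H ∈ (0,1)`, `m > 1`, and let `(π_n)` be partitions of `[0,T]`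
whose oscillation `sup_{[s,t] ∈ π_n} |B_t − B_s|` tends to `0`. If
`Σ_{[s,t] ∈ π_n, B_s < a < B_t} |B_t − B_s|^{1/H − 1}` converges to `ℓ` in `L^m(ℝ)`,
then `L̃^{π_n}_T(a) = Σ_{[s,t] ∈ π_n, B_s < a < B_t} |B_t − a|^{1/H − 1}` converges to
`H·ℓ` weakly in `L^m(ℝ)`: tested against any `g ∈ L^{m'}(ℝ)` with `1/m + 1/m' = 1`. -/
theorem discretized_local_time_weak_convergence
    (T H m : ℝ) (hT : 0 < T) (hH0 : 0 < H) (hH1 : H < 1) (hm : 1 < m)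
    (B : ℝ → ℝ) (hB : ContinuousOn B (Set.Icc 0 T))
    -- the sequence of partitions `π_n` of `[0, T]`
    (N : ℕ → ℕ) (t : ℕ → ℕ → ℝ)
    (hN : ∀ n, 0 < N n) (ht0 : ∀ n, t n 0 = 0) (htN : ∀ n, t n (N n) = T)
    (hmono : ∀ n, ∀ i < N n, t n i < t n (i + 1))
    -- the oscillation of `B` along `π_n` tends to `0`
    (hosc : ∀ ε : ℝ, 0 < ε → ∃ n0 : ℕ, ∀ n ≥ n0, ∀ i < N n,
      |B (t n (i + 1)) - B (t n i)| ≤ ε)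
    -- `ℓ ∈ L^m(ℝ)` and `Σ |B_t − B_s|^{1/H−1} 1_{B_s < a < B_t} → ℓ` in `L^m(ℝ)`
    (ℓ : ℝ → ℝ) (hℓ : MemLp ℓ (ENNReal.ofReal m) volume)
    (hconv : Tendsto
      (fun n => ∫ a : ℝ,
        |(∑ i ∈ Finset.range (N n),
            if B (t n i) < a ∧ a < B (t n (i + 1))
            then |B (t n (i + 1)) - B (t n i)| ^ (1 / H - 1) else 0) - ℓ a| ^ m)
      atTop (nhds 0))
    -- the dual exponent and a test function `g ∈ L^{m'}(ℝ)`
    (m' : ℝ) (hm' : 1 / m + 1 / m' = 1)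
    (g : ℝ → ℝ) (hg : MemLp g (ENNReal.ofReal m') volume) :
    Tendsto
      (fun n => ∫ a : ℝ,
        (∑ i ∈ Finset.range (N n),
          if B (t n i) < a ∧ a < B (t n (i + 1))
          then |B (t n (i + 1)) - a| ^ (1 / H - 1) else 0) * g a)
      atTop (nhds (H * ∫ a : ℝ, ℓ a * g a)) :=
  discretized_local_time_weak_convergence_general H m hH0 hH1 hm B N t hosc ℓ hℓ hconv m' hm' g hg
end
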